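/- arXiv:1601.07348 — 7 statements merged into one kernel-verified Lean document; each statement's English description precedes it below -/
import Mathlib

section
/- For all integers d ≥ 0, the identity τ(b_d(t)) = l_d · Σ_{i=0}^{d} b_i(t)/l_i holds in F_q(θ)[t], where τ(b_d(t)) denotes b_d(t) with θ replaced by θ^q in each factor. -/
set_option autoImplicit false

open Polynomial

/-! Write `a i = θ ^ q ^ i`, so that `b i = ∏_{m<i} (X - a m)` and `τ(b d) = ∏_{m<d} (X - a (m+1))`.
Multiplying the sum by `l (d+1) = (a 0 - a (d+1)) * l d` and splitting off the top term `b (d+1)`,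
the induction step is the factorisation
`(a 0 - a (d+1)) * τ(b d) + (X - a 0) * τ(b d) = (X - a (d+1)) * τ(b d) = τ(b (d+1))`.
The only arithmetic input is `l i ≠ 0`, i.e. `θ ^ q ^ i ≠ θ` for `i ≥ 1`. -/

section Interpolation

variable {K : Type*} [Field K] (a : ℕ → K) (l : ℕ → K) (b : ℕ → K[X])

theorem eq_prod_X_sub_C_of_succ (hb0 : b 0 = 1) (hb : ∀ i, b (i + 1) = b i * (X - C (a i)))
    (n : ℕ) : b n = ∏ m ∈ Finset.range n, (X - C (a m)) := by
  induction n with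
  | zero => simp [hb0]
  | succ n ih => rw [hb, ih, Finset.prod_range_succ]

theorem ne_zero_of_succ_eq_sub_mul (ha : ∀ i, a (i + 1) ≠ a 0) (hl0 : l 0 = 1)
    (hl : ∀ i, l (i + 1) = (a 0 - a (i + 1)) * l i) (n : ℕ) : l n ≠ 0 := by
  induction n with
  | zero => simp [hl0]
  | succ n ih => rw [hl]; exact mul_ne_zero (sub_ne_zero.mpr (ha n).symm) ih

theorem prod_X_sub_C_succ_eq_mul_sum (ha : ∀ i, a (i + 1) ≠ a 0) (hl0 : l 0 = 1)
    (hl : ∀ i, l (i + 1) = (a 0 - a (i + 1)) * l i) (hb0 : b 0 = 1)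
    (hb : ∀ i, b (i + 1) = b i * (X - C (a i))) (d : ℕ) :
    ∏ m ∈ Finset.range d, (X - C (a (m + 1))) =
      C (l d) * ∑ i ∈ Finset.range (d + 1), C (l i)⁻¹ * b i := by
  induction d with
  | zero => simp [hb0, hl0]
  | succ d ih =>
    have hl_ne := ne_zero_of_succ_eq_sub_mul a l ha hl0 hl (d + 1)
    have hb_succ : b (d + 1) = (X - C (a 0)) * ∏ m ∈ Finset.range d, (X - C (a (m + 1))) := by
      rw [eq_prod_X_sub_C_of_succ a b hb0 hb, Finset.prod_range_succ', mul_comm]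
    calc ∏ m ∈ Finset.range (d + 1), (X - C (a (m + 1)))
        = (C (a 0 - a (d + 1)) + (X - C (a 0))) * ∏ m ∈ Finset.range d, (X - C (a (m + 1))) := by
          rw [Finset.prod_range_succ, C_sub]; ring
      _ = C (l (d + 1)) * ∑ i ∈ Finset.range (d + 1), C (l i)⁻¹ * b i + b (d + 1) := by
          rw [add_mul, hb_succ, ih, ← mul_assoc, ← C_mul, ← hl]
      _ = C (l (d + 1)) * ∑ i ∈ Finset.range (d + 2), C (l i)⁻¹ * b i := by
          rw [Finset.sum_range_succ _ (d + 1), mul_add, ← mul_assoc, ← C_mul,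
            mul_inv_cancel₀ hl_ne, C_1, one_mul]

end Interpolation

theorem RatFunc.X_pow_ne_X {K : Type*} [Field K] {n : ℕ} (hn : n ≠ 1) :
    (RatFunc.X : RatFunc K) ^ n ≠ RatFunc.X := by
  rw [← RatFunc.algebraMap_X, ← map_pow, Ne, (RatFunc.algebraMap_injective K).eq_iff]
  intro h
  simpa [hn] using congrArg natDegree h

/-- For all `d ≥ 0`, `τ(b_d(t)) = l_d * ∑_{i=0}^{d} b_i(t)/l_i` in `F_q(θ)[t]`,
where `τ` replaces `θ` by `θ^q` in each factor of `b_d(t)`. -/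
theorem twist_b_eq_l_mul_sum
    (Fq : Type) [Field Fq] [Fintype Fq] (q : ℕ) (hq : q = Fintype.card Fq)
    (θ : RatFunc Fq) (hθ : θ = RatFunc.X)
    (l : ℕ → RatFunc Fq) (hl0 : l 0 = 1)
    (hl : ∀ i, l (i + 1) = (θ - θ ^ q ^ (i + 1)) * l i)
    (b : ℕ → Polynomial (RatFunc Fq)) (hb0 : b 0 = 1)
    (hb : ∀ i, b (i + 1) = b i * (X - C (θ ^ q ^ i)))
    (d : ℕ) :
    (∏ m ∈ Finset.range d, (X - C (θ ^ q ^ (m + 1)))) =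
      C (l d) * ∑ i ∈ Finset.range (d + 1), C (l i)⁻¹ * b i := by
  have hq1 : 1 < q := hq ▸ Fintype.one_lt_card
  have ha : ∀ i, θ ^ q ^ (i + 1) ≠ θ ^ q ^ 0 := fun i => by
    rw [pow_zero, pow_one, hθ]
    exact RatFunc.X_pow_ne_X (Nat.one_lt_pow (Nat.succ_ne_zero i) hq1).ne'
  exact prod_X_sub_C_succ_eq_mul_sum (fun i => θ ^ q ^ i) l b ha hl0
    (fun i => by simpa using hl i) hb0 hb d
end

section
/- For all d ≥ 0, the twisted power sum S_d(1; χ_t) := Σ_{a monic of degree d in F_q[θ]} a(t)/a equals b_d(t)/l_d in F_q(θ)[t], where a(t) denotes the polynomial a with θ replaced by the variable t. -/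
set_option autoImplicit false

open Polynomial

/-!
Write `a = θ^d - v` with `v` running over the `q^d` polynomials of degree `< d`, and let `w_i`
(`i ≤ d`) be the Lagrange weights `∏_{j ≠ i} (θ^{q^i} - θ^{q^j})⁻¹` of the nodes `θ^{q^i}`.
Since `u^{q^i} = u(θ^{q^i})`, the `q`-linear polynomial `E(x) = ∑ w_i x^{q^i}` sends every `u` of
degree `≤ d` to its coefficient of `θ^d`. Hence `E = w_d ∏_v (x - v)` and `E' = w_0`, and the
barycentric Lagrange formula on the nodes `v` gives `∑_a g(θ^d - a) / a = w_0 g(θ^d)` for every `g`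
of degree `< q^d`. For `g = 1` this is Carlitz's `∑ 1/a = w_0 = 1/l_d`; for `g = (θ^d - x)^{q^i}` it
shows that the twisted sum vanishes at `t = θ^{q^i}`, `i < d`. A polynomial in `t` of degree `≤ d`
with these `d` roots and leading coefficient `1/l_d` is `b_d(t)/l_d`.
-/

namespace TwistedPowerSum

open Finset

theorem degree_lt_of_natDegree_le_of_coeff_eq_zero {R : Type*} [Semiring R] {p : R[X]} {n : ℕ}
    (h : p.natDegree ≤ n) (hc : p.coeff n = 0) : p.degree < n := by
  rw [degree_lt_iff_coeff_zero]
  intro m hm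
  rcases hm.eq_or_lt with rfl | hm
  · exact hc
  · exact coeff_eq_zero_of_natDegree_lt (h.trans_lt hm)

section Field

variable {Fq : Type*} [Field Fq]

-- The nodes `v` of the header: the `q^d` polynomials of degree `< d`, viewed in `RatFunc Fq`.
variable (Fq) in
noncomputable def lowNode (d : ℕ) (c : Fin d → Fq) : RatFunc Fq :=
  algebraMap Fq[X] (RatFunc Fq) ((degreeLTEquiv Fq d).symm c)

theorem lowNode_injective (d : ℕ) : Function.Injective (lowNode Fq d) :=
  (RatFunc.algebraMap_injective Fq).comp <|
    Subtype.val_injective.comp (degreeLTEquiv Fq d).symm.injective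

theorem degree_lowNode_lt (d : ℕ) (c : Fin d → Fq) :
    (((degreeLTEquiv Fq d).symm c : degreeLT Fq d) : Fq[X]).degree < d :=
  mem_degreeLT.1 ((degreeLTEquiv Fq d).symm c).2

variable (Fq) in
noncomputable def monicOfDegree (d : ℕ) (c : Fin d → Fq) : Fq[X] :=
  X ^ d - ((degreeLTEquiv Fq d).symm c : Fq[X])

theorem algebraMap_monicOfDegree (d : ℕ) (c : Fin d → Fq) :
    algebraMap Fq[X] (RatFunc Fq) (monicOfDegree Fq d c) = RatFunc.X ^ d - lowNode Fq d c := by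
  rw [monicOfDegree, map_sub, map_pow, RatFunc.algebraMap_X, lowNode]

theorem monicOfDegree_injective (d : ℕ) : Function.Injective (monicOfDegree Fq d) :=
  fun _ _ h => (degreeLTEquiv Fq d).symm.injective (Subtype.val_injective (sub_right_injective h))

theorem range_monicOfDegree (d : ℕ) :
    Set.range (monicOfDegree Fq d) = {a | a.Monic ∧ a.natDegree = d} := by
  ext a
  constructor
  · rintro ⟨c, rfl⟩
    have hlt : _ < (X ^ d : Fq[X]).degree :=
      (degree_X_pow (R := Fq) d).symm ▸ degree_lowNode_lt d c
    refine ⟨monic_X_pow_sub (degree_lowNode_lt d c), natDegree_eq_of_degree_eq_some ?_⟩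
    rw [monicOfDegree, degree_sub_eq_left_of_degree_lt hlt, degree_X_pow]
  · rintro ⟨ha, rfl⟩
    have hlt : X ^ a.natDegree - a ∈ degreeLT Fq a.natDegree := by
      rw [mem_degreeLT, ← degree_X_pow (R := Fq) a.natDegree]
      refine degree_sub_lt_left ?_ (pow_ne_zero _ X_ne_zero) ?_
      · rw [degree_X_pow, degree_eq_natDegree ha.ne_zero]
      · rw [leadingCoeff_X_pow, ha.leadingCoeff]
    refine ⟨degreeLTEquiv Fq a.natDegree ⟨_, hlt⟩, ?_⟩
    rw [monicOfDegree, LinearEquiv.symm_apply_apply, sub_sub_cancel]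

theorem theta_pow_sub_lowNode_ne_zero (d : ℕ) (c : Fin d → Fq) :
    (RatFunc.X : RatFunc Fq) ^ d - lowNode Fq d c ≠ 0 := by
  rw [← algebraMap_monicOfDegree]
  exact (map_ne_zero_iff _ (RatFunc.algebraMap_injective Fq)).2
    ((range_monicOfDegree d).subset ⟨c, rfl⟩).1.ne_zero

end Field

variable {Fq : Type*} [Field Fq] [Fintype Fq]

local notation "q" => Fintype.card Fq

theorem expand_card_pow (u : Fq[X]) (n : ℕ) : expand Fq (q ^ n) u = u ^ q ^ n := by
  induction n with
  | zero => simp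
  | succ n ih => rw [pow_succ, expand_mul, FiniteField.expand_card, map_pow, ih, pow_mul]

theorem aeval_pow_card_pow {L : Type*} [CommRing L] [Algebra Fq L] (x : L) (u : Fq[X]) (n : ℕ) :
    aeval (x ^ q ^ n) u = aeval x u ^ q ^ n := by
  rw [← expand_aeval, expand_card_pow, map_pow]

variable (Fq) in
noncomputable def frobTheta (i : ℕ) : RatFunc Fq := RatFunc.X ^ q ^ i

theorem frobTheta_injective : Function.Injective (frobTheta Fq) := by
  intro i j h
  have hX : (X : Fq[X]) ^ q ^ i = X ^ q ^ j := RatFunc.algebraMap_injective Fq <| by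
    simpa only [map_pow, RatFunc.algebraMap_X, frobTheta] using h
  simpa using Nat.pow_right_injective Fintype.one_lt_card (by simpa using congrArg natDegree hX)

theorem eval_frobTheta_map (u : Fq[X]) (i : ℕ) :
    (u.map (algebraMap Fq (RatFunc Fq))).eval (frobTheta Fq i) =
      algebraMap Fq[X] (RatFunc Fq) u ^ q ^ i := by
  rw [eval_map_algebraMap, frobTheta, aeval_pow_card_pow, ← RatFunc.algebraMap_X,
    aeval_algebraMap_apply, aeval_X_left_apply]

variable (Fq) in
noncomputable def weight (d i : ℕ) : RatFunc Fq :=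
  Lagrange.nodalWeight (range (d + 1)) (frobTheta Fq) i

theorem weight_ne_zero {d i : ℕ} (hi : i ≤ d) : weight Fq d i ≠ 0 :=
  Lagrange.nodalWeight_ne_zero frobTheta_injective.injOn (mem_range.2 (Nat.lt_succ_of_le hi))

theorem inv_weight_zero (d : ℕ) :
    (weight Fq d 0)⁻¹ = ∏ i ∈ range d, (RatFunc.X - frobTheta Fq (i + 1)) := by
  rw [weight, Lagrange.nodalWeight, prod_inv_distrib, inv_inv, range_add_one',
    erase_insert (by simp), prod_map]
  simp only [frobTheta, pow_zero, pow_one]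
  rfl

-- A constant multiple of Carlitz's `e_d(x) = ∏_{deg v < d} (x - v)`, normalised so that its
-- value at `θ^d` is `1`.
variable (Fq) in
noncomputable def ePoly (d : ℕ) : (RatFunc Fq)[X] :=
  ∑ i ∈ range (d + 1), C (weight Fq d i) * X ^ q ^ i

theorem eval_ePoly_algebraMap {d : ℕ} {u : Fq[X]} (hu : u.natDegree ≤ d) :
    (ePoly Fq d).eval (algebraMap Fq[X] (RatFunc Fq) u) =
      algebraMap Fq (RatFunc Fq) (u.coeff d) := by
  have hdeg : (u.map (algebraMap Fq (RatFunc Fq))).degree < #(range (d + 1)) := by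
    rw [card_range]
    exact (degree_map_le.trans (degree_le_of_natDegree_le hu)).trans_lt
      (WithBot.coe_lt_coe.2 d.lt_succ_self)
  have h := Lagrange.coeff_eq_sum frobTheta_injective.injOn hdeg
  rw [card_range, Nat.add_sub_cancel, coeff_map] at h
  rw [h, ePoly, eval_finsetSum]
  refine sum_congr rfl fun i _ => ?_
  rw [eval_mul, eval_C, eval_pow, eval_X, eval_frobTheta_map, weight, Lagrange.nodalWeight,
    prod_inv_distrib, div_eq_mul_inv, mul_comm]

theorem derivative_ePoly (d : ℕ) : derivative (ePoly Fq d) = C (weight Fq d 0) := by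
  have hq : (q : RatFunc Fq) = 0 := by
    rw [← map_natCast (algebraMap Fq (RatFunc Fq)), FiniteField.cast_card_eq_zero, map_zero]
  simp [ePoly, sum_range_succ', derivative_X_pow, hq]

theorem eval_ePoly_lowNode (d : ℕ) (c : Fin d → Fq) : (ePoly Fq d).eval (lowNode Fq d c) = 0 := by
  have hlt := degree_lowNode_lt d c
  rw [lowNode, eval_ePoly_algebraMap (natDegree_le_of_degree_le hlt.le),
    coeff_eq_zero_of_degree_lt hlt, map_zero]

theorem eval_ePoly_theta_pow (d : ℕ) : (ePoly Fq d).eval (RatFunc.X ^ d) = 1 := by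
  rw [← RatFunc.algebraMap_X, ← map_pow, eval_ePoly_algebraMap (natDegree_X_pow_le d),
    coeff_X_pow_self, map_one]

theorem ePoly_eq_C_mul_nodal (d : ℕ) :
    ePoly Fq d = C (weight Fq d d) * Lagrange.nodal univ (lowNode Fq d) := by
  have hcard : #(univ : Finset (Fin d → Fq)) = q ^ d := by simp
  refine eq_of_degree_sub_lt_of_eval_index_eq univ (lowNode_injective d).injOn ?_ ?_
  · have hsplit : ePoly Fq d - C (weight Fq d d) * Lagrange.nodal univ (lowNode Fq d) =
        ∑ i ∈ range d, weight Fq d i • X ^ q ^ i +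
          weight Fq d d • (X ^ q ^ d - Lagrange.nodal univ (lowNode Fq d)) := by
      simp only [ePoly, sum_range_succ, smul_eq_C_mul]
      ring
    rw [hsplit, hcard, ← mem_degreeLT]
    refine add_mem (sum_mem fun i hi => Submodule.smul_mem _ _ ?_) (Submodule.smul_mem _ _ ?_)
    · rw [mem_degreeLT, degree_X_pow, Nat.cast_lt]
      exact Nat.pow_lt_pow_right Fintype.one_lt_card (mem_range.1 hi)
    · rw [mem_degreeLT, ← degree_X_pow (R := RatFunc Fq) (q ^ d)]
      refine degree_sub_lt_left ?_ (pow_ne_zero _ X_ne_zero) ?_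
      · rw [degree_X_pow, Lagrange.degree_nodal, hcard]
      · rw [leadingCoeff_X_pow, Lagrange.nodal_monic.leadingCoeff]
  · intro c _
    rw [eval_ePoly_lowNode, eval_mul, Lagrange.eval_nodal_at_node (mem_univ c), mul_zero]

theorem nodalWeight_lowNode [DecidableEq Fq] (d : ℕ) (c : Fin d → Fq) :
    Lagrange.nodalWeight univ (lowNode Fq d) c = weight Fq d d / weight Fq d 0 := by
  have h := congrArg (eval (lowNode Fq d c)) (derivative_ePoly (Fq := Fq) d)
  rw [ePoly_eq_C_mul_nodal, derivative_C_mul, eval_mul, eval_C, eval_C] at h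
  rw [Lagrange.nodalWeight_eq_eval_derivative_nodal (mem_univ c), ← h,
    div_mul_cancel_left₀ (weight_ne_zero le_rfl)]

theorem eval_nodal_theta_pow (d : ℕ) :
    (Lagrange.nodal univ (lowNode Fq d)).eval (RatFunc.X ^ d) = (weight Fq d d)⁻¹ := by
  have h := eval_ePoly_theta_pow (Fq := Fq) d
  rw [ePoly_eq_C_mul_nodal, eval_mul, eval_C] at h
  exact eq_inv_of_mul_eq_one_right h

theorem sum_eval_lowNode_div {d : ℕ} {g : (RatFunc Fq)[X]} (hg : g.degree < (q ^ d : ℕ)) :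
    ∑ c, g.eval (lowNode Fq d c) / (RatFunc.X ^ d - lowNode Fq d c) =
      weight Fq d 0 * g.eval (RatFunc.X ^ d) := by
  classical
  have hne := theta_pow_sub_lowNode_ne_zero (Fq := Fq) d
  have h := Lagrange.eval_interpolate_not_at_node (fun c => g.eval (lowNode Fq d c))
    (s := univ) (x := RatFunc.X ^ d) fun c _ => sub_ne_zero.1 (hne c)
  rw [← Lagrange.eq_interpolate (lowNode_injective d).injOn (by simpa using hg),
    eval_nodal_theta_pow] at h
  have hd := weight_ne_zero (Fq := Fq) (le_refl d)
  have h0 := weight_ne_zero (Fq := Fq) (Nat.zero_le d)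
  rw [h, mul_sum, mul_sum]
  refine sum_congr rfl fun c _ => ?_
  rw [nodalWeight_lowNode]
  field_simp [hne c]

theorem sum_inv_mul_map_monicOfDegree (d : ℕ) :
    ∑ c, C (algebraMap Fq[X] (RatFunc Fq) (monicOfDegree Fq d c))⁻¹ *
        (monicOfDegree Fq d c).map (algebraMap Fq (RatFunc Fq)) =
      C (weight Fq d 0) * ∏ i ∈ range d, (X - C (frobTheta Fq i)) := by
  set S := ∑ c, C (algebraMap Fq[X] (RatFunc Fq) (monicOfDegree Fq d c))⁻¹ *
        (monicOfDegree Fq d c).map (algebraMap Fq (RatFunc Fq))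
  set B := ∏ i ∈ range d, (X - C (frobTheta Fq i))
  have hmonic (c : Fin d → Fq) := (range_monicOfDegree (Fq := Fq) d).subset ⟨c, rfl⟩
  have hB : B.Monic ∧ B.natDegree = d := by
    refine ⟨monic_prod_of_monic _ _ fun i _ => monic_X_sub_C _, ?_⟩
    rw [natDegree_prod_of_monic _ _ fun i _ => monic_X_sub_C _]
    simp
  have hS : S.natDegree ≤ d := by
    refine natDegree_sum_le_of_forall_le _ _ fun c _ => (natDegree_C_mul_le _ _).trans ?_
    exact natDegree_map_le.trans (hmonic c).2.le
  have hSd : S.coeff d = weight Fq d 0 := by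
    have h := sum_eval_lowNode_div (Fq := Fq) (d := d) (g := 1)
      (degree_one.trans_lt (by exact_mod_cast pow_pos Fintype.card_pos d))
    simp only [eval_one, one_div, mul_one] at h
    rw [← h, finsetSum_coeff]
    refine sum_congr rfl fun c _ => ?_
    have hlead : (monicOfDegree Fq d c).coeff d = 1 := by
      convert (hmonic c).1.coeff_natDegree using 2
      exact (hmonic c).2.symm
    rw [coeff_C_mul, coeff_map, hlead, map_one, mul_one, algebraMap_monicOfDegree]
  refine eq_of_degree_sub_lt_of_eval_index_eq (range d) frobTheta_injective.injOn ?_ ?_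
  · rw [card_range]
    refine degree_lt_of_natDegree_le_of_coeff_eq_zero
      ((natDegree_sub_le _ _).trans (max_le hS ((natDegree_C_mul_le _ _).trans hB.2.le))) ?_
    rw [coeff_sub, hSd, coeff_C_mul, ← hB.2, hB.1.coeff_natDegree, mul_one, sub_self]
  · intro i hi
    have hlt : q ^ i < q ^ d := Nat.pow_lt_pow_right Fintype.one_lt_card (mem_range.1 hi)
    have h := sum_eval_lowNode_div (Fq := Fq) (d := d) (g := (C (RatFunc.X ^ d) - X) ^ q ^ i)
      ((degree_le_of_natDegree_le ((natDegree_pow_le_of_le _ (by compute_degree)).trans_eq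
        (mul_one _))).trans_lt (by exact_mod_cast hlt))
    simp only [eval_pow, eval_sub, eval_C, eval_X, sub_self,
      zero_pow (pow_ne_zero _ Fintype.card_ne_zero), mul_zero] at h
    rw [eval_mul, eval_C, eval_prod, prod_eq_zero hi (by rw [eval_sub, eval_X, eval_C, sub_self]),
      mul_zero, eval_finsetSum, ← h]
    refine sum_congr rfl fun c _ => ?_
    rw [eval_mul, eval_C, eval_frobTheta_map, algebraMap_monicOfDegree, div_eq_mul_inv, mul_comm]

end TwistedPowerSum

/-- For all `d ≥ 0`, the twisted power sum `S_d(1; χ_t) = ∑_{a ∈ A⁺(d)} a(t)/a`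
equals `b_d(t)/l_d` in `F_q(θ)[t]`, where `a(t)` is `a` with `θ` replaced by `t`. -/
theorem twistedPowerSum_one_chi
    (Fq : Type) [Field Fq] [Fintype Fq] (q : ℕ) (hq : q = Fintype.card Fq)
    (θ : RatFunc Fq) (hθ : θ = RatFunc.X)
    (l : ℕ → RatFunc Fq) (hl0 : l 0 = 1)
    (hl : ∀ i, l (i + 1) = (θ - θ ^ q ^ (i + 1)) * l i)
    (b : ℕ → Polynomial (RatFunc Fq)) (hb0 : b 0 = 1)
    (hb : ∀ i, b (i + 1) = b i * (X - C (θ ^ q ^ i)))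
    (d : ℕ) :
    ∑ᶠ a ∈ {a : Polynomial Fq | a.Monic ∧ a.natDegree = d},
      C (algebraMap (Polynomial Fq) (RatFunc Fq) a)⁻¹ *
        a.eval₂ (C.comp ((algebraMap (Polynomial Fq) (RatFunc Fq)).comp Polynomial.C)) X
      = C (l d)⁻¹ * b d := by
  subst hq hθ
  have hl_prod (n : ℕ) :
      l n = ∏ i ∈ Finset.range n, (RatFunc.X - TwistedPowerSum.frobTheta Fq (i + 1)) := by
    induction n with
    | zero => rw [hl0, Finset.prod_range_zero]
    | succ n ih => rw [hl, ih, Finset.prod_range_succ, mul_comm]; rfl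
  have hb_prod (n : ℕ) : b n = ∏ i ∈ Finset.range n, (X - C (TwistedPowerSum.frobTheta Fq i)) := by
    induction n with
    | zero => rw [hb0, Finset.prod_range_zero]
    | succ n ih => rw [hb, ih, Finset.prod_range_succ]; rfl
  rw [hl_prod, ← TwistedPowerSum.inv_weight_zero, inv_inv, hb_prod,
    ← TwistedPowerSum.range_monicOfDegree,
    finsum_mem_range (TwistedPowerSum.monicOfDegree_injective d), finsum_eq_sum_of_fintype,
    ← TwistedPowerSum.sum_inv_mul_map_monicOfDegree, IsScalarTower.algebraMap_eq Fq Fq[X],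
    ← Polynomial.algebraMap_eq]
  -- `Polynomial.map f` is by definition `eval₂ (C.comp f) X`.
  rfl
end

section
/- For all d ≥ 0, the twisted power sum Σ_{a monic of degree d} a(t_1)a(t_2)/a equals b_d(t_1) b_d(t_2) / l_d in F_q(θ)[t_1, t_2], provided q > 2. -/
/-!
Write a monic `a` of degree `d + 1` as `θ g + c` with `g` monic of degree `d` and `c ∈ 𝔽_q`.
For `x ∉ 𝔽_q`, partial fractions give `∑_c (u + c)(v + c)/(x + c) = -(u - x)(v - x)/(x^q - x)`,
from `∑_c 1/(x - c) = -1/(x^q - x)` and `∑_c c = 0`; the latter is where `q > 2` enters.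

To iterate, deform the summand: at level `k`, replace `g(T)` by the divided difference
`P_k g = (T^k g)[θ, θ^q, …, θ^{q^(k-1)}, T]` and `g(θ)` by `w = P_k g (θ^{q^k})`.
Then `P_k (θ g + c) = H + c` with `H(T) - w = (T - θ^{q^k}) P_{k+1} g (T)`. The Frobenius
`h ↦ h^q` shifts the nodes `θ^{q^j}`, so Newton's recursion gives
`w^q - w = (θ^{q^(k+1)} - θ) P_{k+1} g (θ^{q^(k+1)})`, and a degree count shows `w ∉ 𝔽_q`.
Hence summing over `c` at level `k` yields the factor
`-(t₁ - θ^{q^k})(t₂ - θ^{q^k})/(θ^{q^(k+1)} - θ)` times the level-`k + 1` sum over `g`,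
and these factors multiply to `b_d(t₁) b_d(t₂)/l_d`.
-/

open Polynomial

namespace Polynomial

variable {R : Type*} [CommRing R]

theorem add_divByMonic {q : R[X]} (hq : q.Monic) (p₁ p₂ : R[X]) :
    (p₁ + p₂) /ₘ q = p₁ /ₘ q + p₂ /ₘ q := by
  nontriviality R
  refine (div_modByMonic_unique _ ((p₁ + p₂) %ₘ q) hq ⟨?_, degree_modByMonic_lt _ hq⟩).1
  rw [add_modByMonic]
  linear_combination modByMonic_add_div p₁ q + modByMonic_add_div p₂ q

theorem C_mul_divByMonic {q : R[X]} (hq : q.Monic) (a : R) (p : R[X]) :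
    (C a * p) /ₘ q = C a * (p /ₘ q) := by
  nontriviality R
  refine (div_modByMonic_unique _ ((C a * p) %ₘ q) hq ⟨?_, degree_modByMonic_lt _ hq⟩).1
  rw [← smul_eq_C_mul, smul_modByMonic]
  simp only [smul_eq_C_mul]
  linear_combination C a * modByMonic_add_div p q

theorem divByMonic_mul [Nontrivial R] {p q : R[X]} (hp : p.Monic) (hq : q.Monic) (m : R[X]) :
    m /ₘ (p * q) = m /ₘ p /ₘ q := by
  refine (div_modByMonic_unique _ (m %ₘ p + p * (m /ₘ p %ₘ q)) (hp.mul hq) ⟨?_, ?_⟩).1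
  · linear_combination modByMonic_add_div m p + p * modByMonic_add_div (m /ₘ p) q
  · have hp0 : p.degree ≠ ⊥ := degree_ne_bot.mpr hp.ne_zero
    rw [hq.degree_mul]
    refine (degree_add_le _ _).trans_lt (max_lt ?_ ?_)
    · exact (degree_modByMonic_lt _ hp).trans_le
        (le_add_of_nonneg_right (zero_le_degree_iff.mpr hq.ne_zero))
    · rw [mul_comm, hp.degree_mul, add_comm]
      exact WithBot.add_lt_add_left hp0 (degree_modByMonic_lt _ hq)

theorem X_sub_C_mul_divByMonic_add_C_eval (m : R[X]) (a : R) :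
    (X - C a) * (m /ₘ (X - C a)) + C (m.eval a) = m := by
  rw [X_sub_C_mul_divByMonic_eq_sub_modByMonic, modByMonic_X_sub_C_eq_C_eval, sub_add_cancel]

theorem eval_divByMonic_X_sub_C_comm [IsDomain R] {a b : R} (hab : a ≠ b) (m : R[X]) :
    (m /ₘ (X - C a)).eval b = (m /ₘ (X - C b)).eval a := by
  have ha := congrArg (eval b) (X_sub_C_mul_divByMonic_add_C_eval m a)
  have hb := congrArg (eval a) (X_sub_C_mul_divByMonic_add_C_eval m b)
  simp only [eval_add, eval_mul, eval_sub, eval_X, eval_C] at ha hb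
  refine mul_left_cancel₀ (sub_ne_zero.mpr hab.symm) ?_
  linear_combination ha + hb

/-- The divided difference `m[x 0, …, x (k - 1), X]` as a polynomial in `X`; its value at `x k`
is `m[x 0, …, x k]`. -/
noncomputable def divDiff (x : ℕ → R) (k : ℕ) (m : R[X]) : R[X] :=
  m /ₘ Lagrange.nodal (Finset.range k) x

section DivDiff

variable (x : ℕ → R) (k : ℕ) (m : R[X])

@[simp]
theorem divDiff_zero : divDiff x 0 m = m := by
  rw [divDiff, Finset.range_zero, Lagrange.nodal_empty, divByMonic_one]

theorem divDiff_succ [Nontrivial R] :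
    divDiff x (k + 1) m = divDiff x k m /ₘ (X - C (x k)) := by
  have h : Lagrange.nodal (Finset.range (k + 1)) x =
      Lagrange.nodal (Finset.range k) x * (X - C (x k)) := Finset.prod_range_succ _ _
  rw [divDiff, divDiff, h, divByMonic_mul Lagrange.nodal_monic (monic_X_sub_C _)]

theorem divDiff_succ' [Nontrivial R] :
    divDiff x (k + 1) m = divDiff (fun i => x (i + 1)) k m /ₘ (X - C (x 0)) := by
  have h : Lagrange.nodal (Finset.range (k + 1)) x =
      Lagrange.nodal (Finset.range k) (fun i => x (i + 1)) * (X - C (x 0)) :=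
    Finset.prod_range_succ' _ _
  rw [divDiff, divDiff, h, divByMonic_mul Lagrange.nodal_monic (monic_X_sub_C _)]

theorem X_sub_C_mul_divDiff_succ_add_C [Nontrivial R] :
    (X - C (x k)) * divDiff x (k + 1) m + C ((divDiff x k m).eval (x k)) = divDiff x k m := by
  rw [divDiff_succ, X_sub_C_mul_divByMonic_add_C_eval]

theorem divDiff_add (n : R[X]) : divDiff x k (m + n) = divDiff x k m + divDiff x k n :=
  add_divByMonic Lagrange.nodal_monic m n

theorem divDiff_C_mul (a : R) : divDiff x k (C a * m) = C a * divDiff x k m :=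
  C_mul_divByMonic Lagrange.nodal_monic a m

theorem divDiff_X_pow [Nontrivial R] : divDiff x k (X ^ k) = 1 := by
  have hN : (Lagrange.nodal (Finset.range k) x).Monic := Lagrange.nodal_monic
  have hdeg : (X ^ k : R[X]).degree = (Lagrange.nodal (Finset.range k) x).degree := by
    rw [degree_X_pow, Lagrange.degree_nodal, Finset.card_range]
  refine (div_modByMonic_unique 1 (X ^ k - Lagrange.nodal (Finset.range k) x) hN ⟨by ring, ?_⟩).1
  exact hdeg ▸ degree_sub_lt_left hdeg (monic_X_pow k).ne_zero
    (by rw [(monic_X_pow k).leadingCoeff, hN.leadingCoeff])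

theorem map_divDiff {S : Type*} [CommRing S] (f : R →+* S) :
    (divDiff x k m).map f = divDiff (f ∘ x) k (m.map f) := by
  rw [divDiff, map_divByMonic f Lagrange.nodal_monic, divDiff]
  simp [Lagrange.nodal, Polynomial.map_prod]

variable [IsDomain R] {x}

theorem eval_divDiff_shift (hx : Function.Injective x) :
    (divDiff (fun i => x (i + 1)) k m).eval (x 0) = (divDiff x k m).eval (x k) := by
  cases k with
  | zero => simp
  | succ k =>
    rw [divDiff_succ, eval_divByMonic_X_sub_C_comm (hx.ne (by omega)), ← divDiff_succ']

theorem sub_mul_eval_divDiff_succ (hx : Function.Injective x) :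
    (x (k + 1) - x 0) * (divDiff x (k + 1) m).eval (x (k + 1)) =
      (divDiff (fun i => x (i + 1)) k m).eval (x (k + 1)) - (divDiff x k m).eval (x k) := by
  have h := congrArg (eval (x (k + 1)))
    (X_sub_C_mul_divByMonic_add_C_eval (divDiff (fun i => x (i + 1)) k m) (x 0))
  rw [← divDiff_succ', eval_divDiff_shift k m hx] at h
  simp only [eval_add, eval_mul, eval_sub, eval_X, eval_C] at h
  linear_combination h

end DivDiff

theorem X_mul_add_C_injective {S : Type*} [Ring S] :
    Function.Injective fun p : S[X] × S => X * p.1 + C p.2 := by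
  rintro ⟨g₁, c₁⟩ ⟨g₂, c₂⟩ h
  have hc : c₁ = c₂ := by simpa using congrArg (coeff · 0) h
  subst hc
  simpa using isRegular_X.left (add_right_cancel h)

section Monics

variable (Fq : Type*) [Field Fq] [Fintype Fq]

open Classical in
noncomputable def monicsOfDegree : ℕ → Finset Fq[X]
  | 0 => {1}
  | d + 1 => (monicsOfDegree d ×ˢ Finset.univ).image fun p => X * p.1 + C p.2

theorem mem_monicsOfDegree {d : ℕ} {a : Fq[X]} :
    a ∈ monicsOfDegree Fq d ↔ a.Monic ∧ a.natDegree = d := by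
  induction d generalizing a with
  | zero =>
    rw [monicsOfDegree, Finset.mem_singleton]
    exact ⟨fun h => h ▸ ⟨monic_one, natDegree_one⟩, fun ⟨hm, h0⟩ => hm.natDegree_eq_zero.mp h0⟩
  | succ d ih =>
    simp only [monicsOfDegree, Finset.mem_image, Finset.mem_product, Finset.mem_univ, and_true,
      Prod.exists, ih]
    constructor
    · rintro ⟨g, c, ⟨hgm, hgd⟩, rfl⟩
      have hXg : (X * g).natDegree = d + 1 := by
        rw [monic_X.natDegree_mul hgm, natDegree_X, hgd, add_comm]
      refine ⟨(monic_X.mul hgm).add_of_left (degree_C_lt.trans_le ?_), by rw [natDegree_add_C, hXg]⟩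
      rw [degree_eq_natDegree (monic_X.mul hgm).ne_zero, hXg]
      exact_mod_cast Nat.le_add_left 1 d
    · rintro ⟨hm, hd⟩
      have hdX : a.divX.natDegree = d := by
        rw [natDegree_divX_eq_natDegree_tsub_one, hd, Nat.add_sub_cancel]
      refine ⟨a.divX, a.coeff 0, ⟨?_, hdX⟩, X_mul_divX_add a⟩
      rw [Monic, leadingCoeff, hdX, coeff_divX, ← hd]
      exact hm.coeff_natDegree

theorem sum_monicsOfDegree_succ {M : Type*} [AddCommMonoid M] (f : Fq[X] → M) (d : ℕ) :
    ∑ a ∈ monicsOfDegree Fq (d + 1), f a =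
      ∑ g ∈ monicsOfDegree Fq d, ∑ c : Fq, f (X * g + C c) := by
  classical
  rw [monicsOfDegree, Finset.sum_image fun p _ p' _ h => X_mul_add_C_injective h,
    Finset.sum_product]

end Monics

end Polynomial

namespace FiniteField

variable {Fq K : Type*} [Field Fq] [Fintype Fq] [Field K] (ι : Fq →+* K)

theorem nodal_univ_eq_X_pow_card_sub_X :
    Lagrange.nodal Finset.univ ι = X ^ Fintype.card Fq - X := by
  have hq : 1 < Fintype.card Fq := Fintype.one_lt_card
  have hdeg : (X ^ Fintype.card Fq - X : K[X]).degree = Fintype.card Fq := by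
    rw [degree_sub_eq_left_of_degree_lt] <;> simp [hq]
  apply Polynomial.eq_of_degree_le_of_eval_index_eq Finset.univ ι.injective.injOn
  · rw [Lagrange.degree_nodal, Finset.card_univ]
  · rw [Lagrange.degree_nodal, hdeg, Finset.card_univ]
  · rw [Lagrange.nodal_monic.leadingCoeff,
      (monic_X_pow_sub (by rw [degree_X]; exact_mod_cast hq)).leadingCoeff]
  · intro c _
    rw [Lagrange.eval_nodal_at_node (Finset.mem_univ c)]
    simp [← map_pow, FiniteField.pow_card]

theorem sum_inv_sub_eq_neg_inv (x : K) (hx : x ^ Fintype.card Fq - x ≠ 0) :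
    ∑ c : Fq, (x - ι c)⁻¹ = -(x ^ Fintype.card Fq - x)⁻¹ := by
  classical
  have hq0 : (Fintype.card Fq : K) = 0 := by
    rw [← map_natCast ι, FiniteField.cast_card_eq_zero, map_zero]
  have hder : ∑ c : Fq, (Lagrange.nodal (Finset.univ.erase c) ι).eval x = -1 := by
    rw [← eval_finsetSum, ← Lagrange.derivative_nodal, nodal_univ_eq_X_pow_card_sub_X]
    simp [derivative_X_pow, hq0]
  have hterm (c : Fq) : (Lagrange.nodal (Finset.univ.erase c) ι).eval x =
      (x ^ Fintype.card Fq - x) * (x - ι c)⁻¹ := by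
    have h := congrArg (eval x) (Lagrange.nodal_eq_mul_nodal_erase (v := ι) (Finset.mem_univ c))
    rw [nodal_univ_eq_X_pow_card_sub_X, eval_mul] at h
    simp only [eval_sub, eval_pow, eval_X, eval_C] at h
    have hc : x - ι c ≠ 0 := fun h0 => hx (by rw [h, h0, zero_mul])
    rw [h]
    field_simp
  simp only [hterm, ← Finset.mul_sum] at hder
  calc ∑ c : Fq, (x - ι c)⁻¹
      = (x ^ Fintype.card Fq - x)⁻¹ * ((x ^ Fintype.card Fq - x) * ∑ c : Fq, (x - ι c)⁻¹) :=
        (inv_mul_cancel_left₀ hx _).symm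
    _ = -(x ^ Fintype.card Fq - x)⁻¹ := by rw [hder, mul_neg_one]

theorem sum_mul_div_add_eq (hq : 2 < Fintype.card Fq) (u v x : K)
    (hx : x ^ Fintype.card Fq - x ≠ 0) :
    ∑ c : Fq, (u + ι c) * (v + ι c) / (x + ι c) =
      -((u - x) * (v - x)) / (x ^ Fintype.card Fq - x) := by
  have hq0 : (Fintype.card Fq : K) = 0 := by
    rw [← map_natCast ι, FiniteField.cast_card_eq_zero, map_zero]
  have hsum : ∑ c : Fq, ι c = 0 := by
    have h := FiniteField.sum_pow_lt_card_sub_one (K := Fq) 1 (by omega)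
    simp only [pow_one] at h
    rw [← map_sum, h, map_zero]
  have hinv : ∑ c : Fq, (x + ι c)⁻¹ = -(x ^ Fintype.card Fq - x)⁻¹ := by
    rw [← sum_inv_sub_eq_neg_inv ι x hx]
    exact Fintype.sum_equiv (Equiv.neg Fq) _ _ fun c => by simp [sub_eq_add_neg]
  have hne (c : Fq) : x + ι c ≠ 0 := fun h => hx (by
    rw [eq_neg_of_add_eq_zero_left h, ← map_neg, ← map_pow, FiniteField.pow_card, sub_self])
  have hterm (c : Fq) : (u + ι c) * (v + ι c) / (x + ι c) =
      (u - x) * (v - x) * (x + ι c)⁻¹ + ((u - x) + (v - x)) + (x + ι c) := by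
    field_simp [hne c]
    ring
  simp only [hterm, Finset.sum_add_distrib, ← Finset.mul_sum, hinv, Finset.sum_const,
    Finset.card_univ, nsmul_eq_mul, hq0, hsum]
  ring

end FiniteField

namespace TwistedPowerSum

section Nodes

variable (Fq : Type*) [Field Fq] [Fintype Fq]

/-- The Frobenius orbit `θ ^ q ^ j` of `θ = X`. -/
noncomputable def node (j : ℕ) : Fq[X] := X ^ Fintype.card Fq ^ j

theorem node_zero : node Fq 0 = X := by
  rw [node, pow_zero, pow_one]

theorem node_injective : Function.Injective (node Fq) := fun i j h => by
  have h := congrArg natDegree h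
  simp only [node, natDegree_X_pow] at h
  exact Nat.pow_right_injective Fintype.one_lt_card h

theorem expand_node (j : ℕ) : expand Fq (Fintype.card Fq) (node Fq j) = node Fq (j + 1) := by
  rw [node, node, map_pow, expand_X, ← pow_mul, pow_succ']

theorem map_expand_map_C (p : Fq[X]) :
    (p.map C).map (expand Fq (Fintype.card Fq) : Fq[X] →+* Fq[X]) = p.map C := by
  rw [Polynomial.map_map]
  congr 1
  exact RingHom.ext fun c => expand_C _ c

/-- The divided difference `p[θ, θ ^ q, …, θ ^ q ^ k]`. -/
noncomputable def orbitDivDiff (p : Fq[X]) (k : ℕ) : Fq[X] :=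
  (divDiff (node Fq) k (p.map C)).eval (node Fq k)

theorem orbitDivDiff_zero (p : Fq[X]) : orbitDivDiff Fq p 0 = p := by
  rw [orbitDivDiff, divDiff_zero, node_zero, eval_map, eval₂_C_X]

theorem orbitDivDiff_pow_card_sub (p : Fq[X]) (k : ℕ) :
    orbitDivDiff Fq p k ^ Fintype.card Fq - orbitDivDiff Fq p k =
      (node Fq (k + 1) - node Fq 0) * orbitDivDiff Fq p (k + 1) := by
  -- `p` has coefficients in `𝔽_q`, so the Frobenius `h ↦ h ^ q` only shifts the nodes
  have hfrob : orbitDivDiff Fq p k ^ Fintype.card Fq =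
      (divDiff (fun i => node Fq (i + 1)) k (p.map C)).eval (node Fq (k + 1)) := by
    have hshift : (expand Fq (Fintype.card Fq) : Fq[X] →+* Fq[X]) ∘ node Fq =
        fun i => node Fq (i + 1) := funext (expand_node Fq)
    rw [orbitDivDiff, ← FiniteField.expand_card, ← expand_node, ← AlgHom.coe_toRingHom,
      ← eval₂_at_apply, ← eval_map, AlgHom.coe_toRingHom, map_divDiff, map_expand_map_C, hshift]
  rw [hfrob, orbitDivDiff, orbitDivDiff, sub_mul_eval_divDiff_succ _ _ (node_injective Fq)]

theorem natDegree_orbitDivDiff (p : Fq[X]) {k : ℕ} (hk : k ≤ p.natDegree) :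
    (orbitDivDiff Fq p k).natDegree = Fintype.card Fq ^ k * (p.natDegree - k) := by
  induction k with
  | zero => rw [orbitDivDiff_zero, pow_zero, one_mul, Nat.sub_zero]
  | succ k ih =>
    set q := Fintype.card Fq
    have hq : 1 < q := Fintype.one_lt_card
    obtain ⟨r, hr⟩ : ∃ r, p.natDegree - k = r + 1 := ⟨p.natDegree - (k + 1), by omega⟩
    set w := orbitDivDiff Fq p k
    have hw : w.natDegree = q ^ k * (r + 1) := by rw [ih (by omega), hr]
    have hlt : w.natDegree < (w ^ q).natDegree := by
      rw [natDegree_pow, hw]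
      exact lt_mul_left (by positivity) hq
    have hsub : (w ^ q - w).natDegree = q ^ (k + 1) * (r + 1) := by
      rw [natDegree_sub_eq_left_of_natDegree_lt hlt, natDegree_pow, hw, pow_succ']
      ring
    have hnode : (node Fq (k + 1) - node Fq 0).natDegree = q ^ (k + 1) := by
      have h : (node Fq 0).natDegree < (node Fq (k + 1)).natDegree := by
        simp only [node, natDegree_X_pow, pow_zero]
        exact Nat.one_lt_pow (by omega) hq
      rw [natDegree_sub_eq_left_of_natDegree_lt h, node, natDegree_X_pow]
    have hne : w ^ q - w ≠ 0 := fun h => by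
      rw [h, natDegree_zero] at hsub
      exact absurd hsub.symm (by positivity)
    rw [orbitDivDiff_pow_card_sub] at hsub hne
    rw [natDegree_mul (left_ne_zero_of_mul hne) (right_ne_zero_of_mul hne), hnode] at hsub
    rw [show p.natDegree - (k + 1) = r by omega]
    linarith

/-- The divided difference `(X ^ k g)[θ, θ ^ q, …, θ ^ q ^ (k - 1), T]`, a polynomial in `T`. -/
noncomputable def twistedPoly (k : ℕ) (g : Fq[X]) : Fq[X][X] :=
  divDiff (node Fq) k ((X ^ k * g).map C)

theorem twistedPoly_X_mul_add_C (k : ℕ) (g : Fq[X]) (c : Fq) :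
    twistedPoly Fq k (X * g + C c) =
      divDiff (node Fq) k ((X ^ (k + 1) * g).map C) + C (C c) := by
  have h : (X ^ k * (X * g + C c)).map (C : Fq →+* Fq[X]) =
      (X ^ (k + 1) * g).map C + C (C c) * X ^ k := by
    simp only [Polynomial.map_add, Polynomial.map_mul, Polynomial.map_pow, map_X, map_C]
    ring
  rw [twistedPoly, h, divDiff_add, divDiff_C_mul, divDiff_X_pow, mul_one]

end Nodes

variable {Fq : Type*} [Field Fq] [Fintype Fq] {K : Type*} [Field K] (ι : Fq[X] →+* K) (t₁ t₂ : K)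

/-- The summand `g(t₁) g(t₂) / g` of the twisted power sum, deformed to level `k`. -/
noncomputable def twistedTerm (k : ℕ) (g : Fq[X]) : K :=
  (twistedPoly Fq k g).eval₂ ι t₁ * (twistedPoly Fq k g).eval₂ ι t₂ /
    ι ((twistedPoly Fq k g).eval (node Fq k))

noncomputable def twistedFactor (j : ℕ) : K :=
  -((t₁ - ι (node Fq j)) * (t₂ - ι (node Fq j))) / ι (node Fq (j + 1) - node Fq 0)

theorem twistedTerm_zero (a : Fq[X]) :
    twistedTerm ι t₁ t₂ 0 a = a.eval₂ (ι.comp C) t₁ * a.eval₂ (ι.comp C) t₂ / ι a := by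
  simp only [twistedTerm, twistedPoly, pow_zero, one_mul, divDiff_zero, eval₂_map, node_zero,
    eval_map, eval₂_C_X]

theorem twistedTerm_one (k : ℕ) : twistedTerm ι t₁ t₂ k 1 = 1 := by
  simp [twistedTerm, twistedPoly, divDiff_X_pow]

theorem sum_twistedTerm_X_mul_add_C (hq : 2 < Fintype.card Fq) (hι : Function.Injective ι)
    {g : Fq[X]} (hg : g ≠ 0) (k : ℕ) :
    ∑ c : Fq, twistedTerm ι t₁ t₂ k (X * g + C c) =
      twistedFactor ι t₁ t₂ k * twistedTerm ι t₁ t₂ (k + 1) g := by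
  set H := divDiff (node Fq) k ((X ^ (k + 1) * g).map C)
  set w := orbitDivDiff Fq (X ^ (k + 1) * g) k
  have hH : H = (X - C (node Fq k)) * twistedPoly Fq (k + 1) g + C w :=
    (X_sub_C_mul_divDiff_succ_add_C _ _ _).symm
  have hw : w ^ Fintype.card Fq - w =
      (node Fq (k + 1) - node Fq 0) * (twistedPoly Fq (k + 1) g).eval (node Fq (k + 1)) :=
    orbitDivDiff_pow_card_sub Fq _ k
  have hdeg : 0 < w.natDegree := by
    have hn : (X ^ (k + 1) * g).natDegree = k + 1 + g.natDegree := by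
      rw [natDegree_mul (pow_ne_zero _ X_ne_zero) hg, natDegree_X_pow]
    rw [natDegree_orbitDivDiff Fq _ (by omega), hn]
    exact Nat.mul_pos (by positivity) (by omega)
  have hx : ι w ^ Fintype.card Fq - ι w ≠ 0 := by
    rw [← map_pow, ← map_sub, map_ne_zero_iff _ hι, sub_ne_zero]
    intro h
    have h := congrArg natDegree h
    rw [natDegree_pow] at h
    nlinarith
  have hterm (c : Fq) : twistedTerm ι t₁ t₂ k (X * g + C c) =
      (H.eval₂ ι t₁ + ι.comp C c) * (H.eval₂ ι t₂ + ι.comp C c) / (ι w + ι.comp C c) := by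
    simp only [twistedTerm, twistedPoly_X_mul_add_C, eval₂_add, eval₂_C, eval_add, eval_C,
      map_add]
    rfl
  have hu (t : K) :
      H.eval₂ ι t - ι w = (t - ι (node Fq k)) * (twistedPoly Fq (k + 1) g).eval₂ ι t := by
    rw [hH]
    simp only [eval₂_add, eval₂_mul, eval₂_sub, eval₂_X, eval₂_C]
    ring
  rw [Finset.sum_congr rfl fun c _ => hterm c,
    FiniteField.sum_mul_div_add_eq (ι.comp C) hq _ _ _ hx, hu, hu, ← map_pow, ← map_sub, hw,
    map_mul, twistedFactor, twistedTerm, div_mul_div_comm]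
  ring

theorem sum_twistedTerm (hq : 2 < Fintype.card Fq) (hι : Function.Injective ι) (d k : ℕ) :
    ∑ g ∈ monicsOfDegree Fq d, twistedTerm ι t₁ t₂ k g =
      ∏ j ∈ Finset.Ico k (k + d), twistedFactor ι t₁ t₂ j := by
  induction d generalizing k with
  | zero => simp [monicsOfDegree, twistedTerm_one]
  | succ d ih =>
    rw [sum_monicsOfDegree_succ, Finset.sum_congr rfl fun g hg =>
      sum_twistedTerm_X_mul_add_C ι t₁ t₂ hq hι ((mem_monicsOfDegree Fq).mp hg).1.ne_zero k,
      ← Finset.mul_sum, ih, show k + 1 + d = k + (d + 1) by omega,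
      Finset.prod_eq_prod_Ico_succ_bot (a := k) (by omega)]

variable {ι} {θ : K} {l b₁ b₂ : ℕ → K}

theorem prod_twistedFactor (hθ : ι X = θ) (hl0 : l 0 = 1)
    (hl : ∀ i, l (i + 1) = (θ - θ ^ Fintype.card Fq ^ (i + 1)) * l i)
    (hb₁0 : b₁ 0 = 1) (hb₂0 : b₂ 0 = 1)
    (hb₁ : ∀ i, b₁ (i + 1) = b₁ i * (t₁ - θ ^ Fintype.card Fq ^ i))
    (hb₂ : ∀ i, b₂ (i + 1) = b₂ i * (t₂ - θ ^ Fintype.card Fq ^ i)) (n : ℕ) :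
    ∏ j ∈ Finset.range n, twistedFactor ι t₁ t₂ j = b₁ n * b₂ n / l n := by
  have hnode (j : ℕ) : ι (node Fq j) = θ ^ Fintype.card Fq ^ j := by
    rw [node, map_pow, hθ]
  induction n with
  | zero => simp [hb₁0, hb₂0, hl0]
  | succ n ih =>
    rw [Finset.prod_range_succ, ih, hb₁, hb₂, hl, twistedFactor, map_sub, hnode, hnode, hnode,
      pow_zero, pow_one, div_mul_div_comm,
      show θ ^ Fintype.card Fq ^ (n + 1) - θ = -(θ - θ ^ Fintype.card Fq ^ (n + 1)) by ring,
      mul_neg, mul_neg, neg_div_neg_eq]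
    congr 1 <;> ring

theorem sum_monicsOfDegree_eq (hq : 2 < Fintype.card Fq) (hι : Function.Injective ι)
    (hθ : ι X = θ) (hl0 : l 0 = 1) (hl : ∀ i, l (i + 1) = (θ - θ ^ Fintype.card Fq ^ (i + 1)) * l i)
    (hb₁0 : b₁ 0 = 1) (hb₂0 : b₂ 0 = 1)
    (hb₁ : ∀ i, b₁ (i + 1) = b₁ i * (t₁ - θ ^ Fintype.card Fq ^ i))
    (hb₂ : ∀ i, b₂ (i + 1) = b₂ i * (t₂ - θ ^ Fintype.card Fq ^ i)) (d : ℕ) :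
    ∑ a ∈ monicsOfDegree Fq d, a.eval₂ (ι.comp C) t₁ * a.eval₂ (ι.comp C) t₂ / ι a =
      b₁ d * b₂ d / l d := by
  have h := sum_twistedTerm ι t₁ t₂ hq hι d 0
  rw [zero_add, ← Finset.range_eq_Ico, prod_twistedFactor t₁ t₂ hθ hl0 hl hb₁0 hb₂0 hb₁ hb₂] at h
  rw [← h]
  exact Finset.sum_congr rfl fun a _ => (twistedTerm_zero ι t₁ t₂ a).symm

end TwistedPowerSum

theorem twistedPowerSum_one_two_vars_general
    (Fq : Type) [Field Fq] [Fintype Fq] (q : ℕ) (hq : q = Fintype.card Fq) (hq2 : 2 < q)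
    (θ t₁ t₂ : RatFunc (RatFunc (RatFunc Fq)))
    (hθ : θ = RatFunc.C (RatFunc.C (RatFunc.X : RatFunc Fq)))
    (ι : Polynomial Fq →+* RatFunc (RatFunc (RatFunc Fq)))
    (hι : ι = RatFunc.C.comp (RatFunc.C.comp (algebraMap (Polynomial Fq) (RatFunc Fq))))
    (l : ℕ → RatFunc (RatFunc (RatFunc Fq))) (hl0 : l 0 = 1)
    (hl : ∀ i, l (i + 1) = (θ - θ ^ q ^ (i + 1)) * l i)
    (b₁ b₂ : ℕ → RatFunc (RatFunc (RatFunc Fq))) (hb₁0 : b₁ 0 = 1) (hb₂0 : b₂ 0 = 1)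
    (hb₁ : ∀ i, b₁ (i + 1) = b₁ i * (t₁ - θ ^ q ^ i))
    (hb₂ : ∀ i, b₂ (i + 1) = b₂ i * (t₂ - θ ^ q ^ i))
    (d : ℕ) :
    ∑ᶠ a ∈ {a : Polynomial Fq | a.Monic ∧ a.natDegree = d},
      a.eval₂ (ι.comp Polynomial.C) t₁ * a.eval₂ (ι.comp Polynomial.C) t₂ / ι a
      = b₁ d * b₂ d / l d := by
  subst hq
  have hι_inj : Function.Injective ι := by
    rw [hι, RingHom.coe_comp, RingHom.coe_comp]
    exact (RingHom.injective _).comp ((RingHom.injective _).comp (RatFunc.algebraMap_injective Fq))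
  have hιX : ι X = θ := by
    simp [hι, hθ, RatFunc.algebraMap_X]
  have hset : {a : Fq[X] | a.Monic ∧ a.natDegree = d} = ↑(monicsOfDegree Fq d) := by
    ext a
    simp [mem_monicsOfDegree]
  rw [hset, finsum_mem_coe_finset]
  exact TwistedPowerSum.sum_monicsOfDegree_eq t₁ t₂ hq2 hι_inj hιX hl0 hl hb₁0 hb₂0 hb₁ hb₂ d

/-- For `q > 2` and all `d ≥ 0`, `∑_{a ∈ A⁺(d)} a(t₁)a(t₂)/a = b_d(t₁)b_d(t₂)/l_d`. -/
theorem twistedPowerSum_one_two_vars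
    (Fq : Type) [Field Fq] [Fintype Fq] (q : ℕ) (hq : q = Fintype.card Fq) (hq2 : 2 < q)
    (θ t₁ t₂ : RatFunc (RatFunc (RatFunc Fq)))
    (hθ : θ = RatFunc.C (RatFunc.C (RatFunc.X : RatFunc Fq)))
    (ht₁ : t₁ = RatFunc.C (RatFunc.X : RatFunc (RatFunc Fq))) (ht₂ : t₂ = RatFunc.X)
    (ι : Polynomial Fq →+* RatFunc (RatFunc (RatFunc Fq)))
    (hι : ι = RatFunc.C.comp (RatFunc.C.comp (algebraMap (Polynomial Fq) (RatFunc Fq))))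
    (l : ℕ → RatFunc (RatFunc (RatFunc Fq))) (hl0 : l 0 = 1)
    (hl : ∀ i, l (i + 1) = (θ - θ ^ q ^ (i + 1)) * l i)
    (b₁ b₂ : ℕ → RatFunc (RatFunc (RatFunc Fq))) (hb₁0 : b₁ 0 = 1) (hb₂0 : b₂ 0 = 1)
    (hb₁ : ∀ i, b₁ (i + 1) = b₁ i * (t₁ - θ ^ q ^ i))
    (hb₂ : ∀ i, b₂ (i + 1) = b₂ i * (t₂ - θ ^ q ^ i))
    (d : ℕ) :
    ∑ᶠ a ∈ {a : Polynomial Fq | a.Monic ∧ a.natDegree = d},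
      a.eval₂ (ι.comp Polynomial.C) t₁ * a.eval₂ (ι.comp Polynomial.C) t₂ / ι a
      = b₁ d * b₂ d / l d :=
  twistedPowerSum_one_two_vars_general Fq q hq hq2 θ t₁ t₂ hθ ι hι l hl0 hl b₁ b₂ hb₁0 hb₂0 hb₁ hb₂
    d
end

section
/- For all d ≥ 0, Σ_{a monic of degree d in F_q[θ]} 1/a^2 = 1/l_d^2. -/
open Polynomial

/-!
Let `V_n = {∑_{i<n} c_i θ^i : c_i ∈ 𝔽_q}`, so that `A⁺(n) = θ^n + V_n`, and put
`e_n(x) = ∏_{v ∈ V_n} (x + v)`. Because `V_{n+1} = V_n + 𝔽_q θ^n` and `e_n` is `𝔽_q`-linear,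
`e_{n+1} = e_n^q - D_n^{q-1} e_n` with `D_n = e_n(θ^n) = ∏_{a ∈ A⁺(n)} a`; this recursion serves as
the definition of `e_n` (`carlitzE`), and the product formula is recovered from it.

Summing `1/(y + c D_n)` over `c ∈ 𝔽_q` turns the recursion into
`∑_{v ∈ V_n} 1/(t + v) = k_n / e_n(t)` with `k_{n+1} = -D_n^{q-1} k_n`. The Carlitz relation
`e_{n+1}(θx) = θ e_{n+1}(x) + (θ^{q^{n+1}} - θ) e_n(x)^q`, proved by induction from the recursion
alone, gives `D_{n+1} = (θ^{q^{n+1}} - θ) D_n^q`, hence `D_n = l_n k_n` and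
`∑_{a ∈ A⁺(n)} 1/a = k_n / D_n = 1/l_n`.

Finally the cross terms of `(∑ 1/a)^2` cancel: for `b ∈ V_n` nonzero,
`1/(a(a+b)) = (1/a - 1/(a+b))/b`, and `a ↦ a + b` permutes `A⁺(n)`.
-/

section FiniteFieldSums

variable {Fq : Type*} [Field Fq]

theorem add_smul_eq_mul_sub_algebraMap {K : Type*} [Field K] [Algebra Fq K] {α : K} (hα : α ≠ 0)
    (y : K) (e : Fq) :
    y + e • α = α * (y / α - algebraMap Fq K (-e)) := by
  rw [map_neg, Algebra.smul_def]
  field_simp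
  ring

variable [Fintype Fq]

local notation "q" => Fintype.card Fq

theorem add_pow_card {R : Type*} [CommRing R] [Algebra Fq R] (x y : R) :
    (x + y) ^ q = x ^ q + y ^ q :=
  map_add (FiniteField.frobeniusAlgHom Fq R) x y

theorem sub_pow_card {R : Type*} [CommRing R] [Algebra Fq R] (x y : R) :
    (x - y) ^ q = x ^ q - y ^ q :=
  map_sub (FiniteField.frobeniusAlgHom Fq R) x y

theorem smul_pow_card {R : Type*} [CommRing R] [Algebra Fq R] (c : Fq) (x : R) :
    (c • x) ^ q = c • x ^ q :=
  map_smul (FiniteField.frobeniusAlgHom Fq R) c x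

theorem prod_X_sub_C_algebraMap (R : Type*) [CommRing R] [Algebra Fq R] :
    ∏ e : Fq, (X - C (algebraMap Fq R e)) = X ^ q - X := by
  have hq : 1 < q := Fintype.one_lt_card
  have h := prod_multiset_X_sub_C_of_monic_of_roots_card_eq
    (monic_X_pow_sub (p := (X : Fq[X])) (by rw [degree_X]; exact_mod_cast hq))
    (by rw [FiniteField.roots_X_pow_card_sub_X, FiniteField.X_pow_card_sub_X_natDegree_eq Fq hq]
        rfl)
  rw [FiniteField.roots_X_pow_card_sub_X] at h
  simpa [Polynomial.map_prod] using congrArg (Polynomial.map (algebraMap Fq R)) h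

theorem natCast_card_eq_zero (R : Type*) [CommRing R] [Algebra Fq R] : (q : R) = 0 := by
  rw [← map_natCast (algebraMap Fq R), FiniteField.cast_card_eq_zero, map_zero]

variable {K : Type*} [Field K] [Algebra Fq K]

theorem sum_inv_sub_algebraMap (z : K) (hz : z ^ q ≠ z) :
    ∑ e : Fq, (z - algebraMap Fq K e)⁻¹ = -(z ^ q - z)⁻¹ := by
  set f : K[X] := ∏ e : Fq, (X - C (algebraMap Fq K e))
  have hsplit : f.Splits := Splits.prod fun e _ => Splits.X_sub_C _
  have hf : f = X ^ q - X := prod_X_sub_C_algebraMap K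
  have hroots : f.roots = Finset.univ.val.map (algebraMap Fq K) := by
    simpa using roots_multiset_prod_X_sub_C (Finset.univ.val.map (algebraMap Fq K))
  have hfz : f.eval z ≠ 0 := by simpa [hf, sub_eq_zero] using hz
  have h := hsplit.eval_derivative_div_eval_of_ne_zero hfz
  rw [hroots, Multiset.map_map] at h
  simp only [hf, derivative_sub, derivative_X_pow, derivative_X, natCast_card_eq_zero] at h
  simp only [eval_sub, eval_mul, eval_C, eval_one, eval_pow, eval_X, zero_mul, zero_sub,
    Function.comp_def, one_div] at h
  rw [Finset.sum_eq_multiset_sum, ← h, neg_div, one_div]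

theorem prod_sub_algebraMap (z : K) : ∏ e : Fq, (z - algebraMap Fq K e) = z ^ q - z := by
  simpa [eval_prod] using congrArg (eval z) (prod_X_sub_C_algebraMap (Fq := Fq) K)

theorem prod_add_smul (y α : K) : ∏ e : Fq, (y + e • α) = y ^ q - α ^ (q - 1) * y := by
  rcases eq_or_ne α 0 with rfl | hα
  · simp [zero_pow (Nat.sub_ne_zero_of_lt (Fintype.one_lt_card (α := Fq)))]
  simp_rw [add_smul_eq_mul_sub_algebraMap hα, Finset.prod_mul_distrib, Finset.prod_const,
    Finset.card_univ]
  rw [Fintype.prod_equiv (Equiv.neg Fq) _ (fun e => y / α - algebraMap Fq K e) (by simp),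
    prod_sub_algebraMap, div_pow, ← pow_sub_one_mul Fintype.card_ne_zero α]
  field_simp

theorem sum_inv_add_smul (y α : K) (h : ∀ e : Fq, y + e • α ≠ 0) :
    ∑ e : Fq, (y + e • α)⁻¹ = -α ^ (q - 1) / (y ^ q - α ^ (q - 1) * y) := by
  rcases eq_or_ne α 0 with rfl | hα
  · simp [natCast_card_eq_zero, zero_pow (Nat.sub_ne_zero_of_lt (Fintype.one_lt_card (α := Fq)))]
  simp_rw [add_smul_eq_mul_sub_algebraMap hα] at h ⊢
  have hz : (y / α) ^ q ≠ y / α := by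
    rw [← sub_ne_zero, ← prod_sub_algebraMap]
    exact Finset.prod_ne_zero_iff.mpr fun e _ => by simpa using right_ne_zero_of_mul (h (-e))
  simp_rw [mul_inv]
  rw [← Finset.mul_sum, Fintype.sum_equiv (Equiv.neg Fq) _
      (fun e => (y / α - algebraMap Fq K e)⁻¹) (by simp), sum_inv_sub_algebraMap _ hz,
    div_pow, ← pow_sub_one_mul Fintype.card_ne_zero α]
  field_simp

end FiniteFieldSums

theorem sum_inv_sq_add_eq_sq_sum_inv {G K F : Type*} [AddCommGroup G] [Fintype G] [Field K]
    [FunLike F G K] [AddMonoidHomClass F G K] (φ : F) (hφ : Function.Injective φ) (t : K)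
    (ht : ∀ g, t + φ g ≠ 0) :
    ∑ g, ((t + φ g) ^ 2)⁻¹ = (∑ g, (t + φ g)⁻¹) ^ 2 := by
  set x : G → K := fun g => (t + φ g)⁻¹
  have hcross : ∀ b ≠ 0, ∑ g, x g * x (g + b) = 0 := by
    intro b hb
    have hφb : φ b ≠ 0 := (map_ne_zero_iff φ hφ).mpr hb
    have hterm : ∀ g, x g * x (g + b) = (φ b)⁻¹ * (x g - x (g + b)) := fun g => by
      have := ht (g + b)
      rw [map_add, ← add_assoc] at this
      simp only [x, map_add, ← add_assoc]
      field_simp [ht g]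
      ring
    rw [Finset.sum_congr rfl fun g _ => hterm g, ← Finset.mul_sum, Finset.sum_sub_distrib,
      Fintype.sum_equiv (Equiv.addRight b) (fun g => x (g + b)) x (fun _ => rfl), sub_self,
      mul_zero]
  calc ∑ g, ((t + φ g) ^ 2)⁻¹ = ∑ g, x g * x (g + 0) := by simp [x, sq]
    _ = ∑ b, ∑ g, x g * x (g + b) :=
        (Finset.sum_eq_single 0 (fun b _ hb => hcross b hb) (by simp)).symm
    _ = (∑ g, x g) ^ 2 := by
        rw [Finset.sum_comm, sq, Finset.sum_mul_sum]
        exact Finset.sum_congr rfl fun g _ =>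
          Fintype.sum_equiv (Equiv.addLeft g) _ _ fun _ => rfl

section Tuples

variable {R : Type*}

@[to_additive]
theorem prod_fin_succ_pi [Fintype R] {M : Type*} [CommMonoid M] (n : ℕ)
    (f : (Fin (n + 1) → R) → M) :
    ∏ c, f c = ∏ e : R, ∏ c : Fin n → R, f (Fin.snoc c e) := by
  rw [← (Fin.snocEquiv fun _ => R).prod_comp, Fintype.prod_prod_type]
  rfl

variable [CommSemiring R] {A : Type*} [Semiring A] [Algebra R A]

variable (R) in
noncomputable def evalCoeffs (θ : A) (n : ℕ) : (Fin n → R) →ₗ[R] A :=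
  Fintype.linearCombination R fun i => θ ^ (i : ℕ)

theorem evalCoeffs_snoc (θ : A) (n : ℕ) (c : Fin n → R) (e : R) :
    evalCoeffs R θ (n + 1) (Fin.snoc c e) = evalCoeffs R θ n c + e • θ ^ n := by
  simp [evalCoeffs, Fintype.linearCombination_apply, Fin.sum_univ_castSucc]

theorem aeval_degreeLTEquiv_symm (θ : A) (n : ℕ) (c : Fin n → R) :
    aeval θ ((degreeLTEquiv R n).symm c : R[X]) = evalCoeffs R θ n c := by
  simp [degreeLTEquiv, evalCoeffs, Fintype.linearCombination_apply, aeval_monomial,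
    Algebra.smul_def]

end Tuples

section Transcendental

variable {R : Type*} [CommRing R] {A : Type*} [Ring A] [Algebra R A]

theorem evalCoeffs_injective {θ : A} (hθ : Transcendental R θ) (n : ℕ) :
    Function.Injective (evalCoeffs R θ n) := by
  intro c c' h
  rw [← aeval_degreeLTEquiv_symm, ← aeval_degreeLTEquiv_symm] at h
  exact (degreeLTEquiv R n).symm.injective (Subtype.ext (transcendental_iff_injective.mp hθ h))

theorem pow_add_evalCoeffs_ne_zero [Nontrivial R] {θ : A} (hθ : Transcendental R θ) (n : ℕ)
    (c : Fin n → R) : θ ^ n + evalCoeffs R θ n c ≠ 0 := by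
  have h : θ ^ n + evalCoeffs R θ n c =
      aeval θ (X ^ n + ((degreeLTEquiv R n).symm c : R[X])) := by
    rw [map_add, map_pow, aeval_X, aeval_degreeLTEquiv_symm]
  rw [h]
  exact fun h0 => (monic_X_pow_add (mem_degreeLT.mp (Subtype.prop _))).ne_zero
    (transcendental_iff.mp hθ _ h0)

end Transcendental

section CarlitzDefs

variable {K : Type*} [CommRing K] (q : ℕ)

noncomputable def carlitzE (θ : K) : ℕ → K[X]
  | 0 => X
  | n + 1 => carlitzE θ n ^ q - C ((carlitzE θ n).eval (θ ^ n) ^ (q - 1)) * carlitzE θ n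

noncomputable def carlitzD (θ : K) (n : ℕ) : K := (carlitzE q θ n).eval (θ ^ n)

/-- The coefficient of `X` in `carlitzE q θ n`. -/
noncomputable def carlitzK (θ : K) (n : ℕ) : K :=
  ∏ i ∈ Finset.range n, -carlitzD q θ i ^ (q - 1)

variable {q}

theorem carlitzE_succ (θ : K) (n : ℕ) :
    carlitzE q θ (n + 1) = carlitzE q θ n ^ q - C (carlitzD q θ n ^ (q - 1)) * carlitzE q θ n :=
  rfl

theorem carlitzK_succ (θ : K) (n : ℕ) :
    carlitzK q θ (n + 1) = carlitzK q θ n * -carlitzD q θ n ^ (q - 1) :=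
  Finset.prod_range_succ _ _

theorem eval_carlitzE_succ (θ x : K) (n : ℕ) :
    (carlitzE q θ (n + 1)).eval x =
      (carlitzE q θ n).eval x ^ q - carlitzD q θ n ^ (q - 1) * (carlitzE q θ n).eval x := by
  simp [carlitzE_succ]

theorem eval_carlitzE_succ_pow_eq_zero (hq : q ≠ 0) (θ : K) (n : ℕ) :
    (carlitzE q θ (n + 1)).eval (θ ^ n) = 0 := by
  rw [eval_carlitzE_succ, ← carlitzD, pow_sub_one_mul hq, sub_self]

theorem carlitzD_succ_of_comp (hq : q ≠ 0) (θ : K) (n : ℕ)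
    (h : (carlitzE q θ (n + 1)).comp (C θ * X) =
      C θ * carlitzE q θ (n + 1) + C (θ ^ q ^ (n + 1) - θ) * carlitzE q θ n ^ q) :
    carlitzD q θ (n + 1) = (θ ^ q ^ (n + 1) - θ) * carlitzD q θ n ^ q := by
  have := congrArg (eval (θ ^ n)) h
  simp only [eval_comp, eval_mul, eval_C, eval_X, eval_add, eval_pow, ← pow_succ',
    eval_carlitzE_succ_pow_eq_zero hq, mul_zero, zero_add] at this
  exact this

end CarlitzDefs

section Carlitz

variable {Fq : Type*} [Field Fq] [Fintype Fq] {K : Type*} [CommRing K] [Algebra Fq K]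

local notation "q" => Fintype.card Fq

theorem eval_carlitzE_add_smul (θ x y : K) (c : Fq) (n : ℕ) :
    (carlitzE q θ n).eval (x + c • y) =
      (carlitzE q θ n).eval x + c • (carlitzE q θ n).eval y := by
  induction n with
  | zero => simp [carlitzE]
  | succ n ih =>
    simp only [eval_carlitzE_succ, ih, add_pow_card, smul_pow_card, smul_sub, mul_add,
      mul_smul_comm]
    abel

theorem carlitzE_succ_comp (θ : K) (n : ℕ) :
    (carlitzE q θ (n + 1)).comp (C θ * X) =
      C θ * carlitzE q θ (n + 1) + C (θ ^ q ^ (n + 1) - θ) * carlitzE q θ n ^ q := by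
  induction n with
  | zero =>
    simp [carlitzE, mul_pow]
    ring
  | succ n ih =>
    have hD := carlitzD_succ_of_comp Fintype.card_ne_zero θ n ih
    have hA : carlitzE q θ (n + 1) ^ q =
        (carlitzE q θ n ^ q) ^ q - C (carlitzD q θ n ^ (q - 1)) ^ q * carlitzE q θ n ^ q := by
      rw [carlitzE_succ, sub_pow_card, mul_pow]
    set a : K := θ ^ q ^ (n + 1) - θ
    have ha : θ ^ q ^ (n + 2) - θ = a ^ q + θ ^ q - θ := by
      rw [sub_pow_card, ← pow_mul, ← pow_succ]
      ring
    have hDa : carlitzD q θ (n + 1) ^ (q - 1) * a = a ^ q * (carlitzD q θ n ^ (q - 1)) ^ q := by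
      rw [hD, mul_pow, ← pow_mul, ← pow_mul, mul_comm q, pow_mul, mul_right_comm,
        pow_sub_one_mul Fintype.card_ne_zero]
    have hDa' := congrArg C hDa
    rw [carlitzE_succ θ (n + 1), sub_comp, pow_comp, mul_comp, C_comp, ih, add_pow_card,
      mul_pow, mul_pow, ha, hA]
    simp only [map_mul, map_pow, map_sub, map_add] at hDa' ⊢
    -- what is left is a multiple of `e_n ^ q`, whose coefficient vanishes by `hDa`
    linear_combination -(carlitzE q θ n ^ q) * hDa'

theorem carlitzD_succ (θ : K) (n : ℕ) :
    carlitzD q θ (n + 1) = (θ ^ q ^ (n + 1) - θ) * carlitzD q θ n ^ q :=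
  carlitzD_succ_of_comp Fintype.card_ne_zero θ n (carlitzE_succ_comp θ n)

theorem carlitzD_eq_mul_carlitzK (θ : K) {l : ℕ → K} (hl0 : l 0 = 1)
    (hl : ∀ i, l (i + 1) = (θ - θ ^ q ^ (i + 1)) * l i) (n : ℕ) :
    carlitzD q θ n = l n * carlitzK q θ n := by
  induction n with
  | zero => simp [carlitzD, carlitzE, carlitzK, hl0]
  | succ n ih =>
    rw [carlitzD_succ, hl, carlitzK_succ,
      ← pow_sub_one_mul Fintype.card_ne_zero (carlitzD q θ n), ih]
    ring

end Carlitz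

section CarlitzProduct

variable {Fq : Type*} [Field Fq] [Fintype Fq] {K : Type*} [Field K] [Algebra Fq K]

local notation "q" => Fintype.card Fq

theorem eval_carlitzE_eq_prod (θ t : K) (n : ℕ) :
    (carlitzE q θ n).eval t = ∏ c : Fin n → Fq, (t + evalCoeffs Fq θ n c) := by
  induction n generalizing t with
  | zero => simp [carlitzE, evalCoeffs, Fintype.linearCombination_apply]
  | succ n ih =>
    simp_rw [prod_fin_succ_pi, evalCoeffs_snoc, ← add_assoc, add_right_comm t, ← ih,
      eval_carlitzE_add_smul, prod_add_smul, eval_carlitzE_succ, carlitzD]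

theorem sum_inv_add_evalCoeffs (θ t : K) (n : ℕ) (ht : ∀ c, t + evalCoeffs Fq θ n c ≠ 0) :
    ∑ c, (t + evalCoeffs Fq θ n c)⁻¹ = carlitzK q θ n / (carlitzE q θ n).eval t := by
  induction n generalizing t with
  | zero => simp [carlitzE, carlitzK, evalCoeffs, Fintype.linearCombination_apply]
  | succ n ih =>
    have hinner (e : Fq) : ∀ c, t + e • θ ^ n + evalCoeffs Fq θ n c ≠ 0 := fun c => by
      have := ht (Fin.snoc c e)
      rwa [evalCoeffs_snoc, ← add_assoc, add_right_comm] at this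
    have hden (e : Fq) : (carlitzE q θ n).eval t + e • carlitzD q θ n ≠ 0 := by
      rw [carlitzD, ← eval_carlitzE_add_smul, eval_carlitzE_eq_prod]
      exact Finset.prod_ne_zero_iff.mpr fun c _ => hinner e c
    simp_rw [sum_fin_succ_pi, evalCoeffs_snoc, ← add_assoc, add_right_comm t]
    rw [Finset.sum_congr rfl fun e _ => ih _ (hinner e)]
    simp_rw [eval_carlitzE_add_smul, div_eq_mul_inv]
    rw [← carlitzD, ← Finset.mul_sum, sum_inv_add_smul _ _ hden, eval_carlitzE_succ, carlitzK_succ]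
    ring

end CarlitzProduct

theorem finsum_mem_monic_natDegree_eq_sum {R M : Type*} [CommRing R] [Nontrivial R] [Fintype R]
    [AddCommMonoid M] (d : ℕ) (f : R[X] → M) :
    ∑ᶠ a ∈ {a : R[X] | a.Monic ∧ a.natDegree = d}, f a =
      ∑ c : Fin d → R, f (X ^ d + ((degreeLTEquiv R d).symm c : R[X])) := by
  rw [← finsum_set_coe_eq_finsum_mem,
    ← finsum_comp_equiv (β := {a : R[X] | a.Monic ∧ a.natDegree = d})
      ((monicEquivDegreeLT d).trans (degreeLTEquiv R d).toEquiv).symm,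
    finsum_eq_sum_of_fintype]
  rfl

/-- For all `d ≥ 0`, `∑_{a ∈ A⁺(d)} 1/a² = 1/l_d²` in `K = F_q(θ)`. -/
theorem powerSum_two_eq_inv_l_sq
    (Fq : Type) [Field Fq] [Fintype Fq] (q : ℕ) (hq : q = Fintype.card Fq)
    (θ : RatFunc Fq) (hθ : θ = RatFunc.X)
    (l : ℕ → RatFunc Fq) (hl0 : l 0 = 1)
    (hl : ∀ i, l (i + 1) = (θ - θ ^ q ^ (i + 1)) * l i)
    (d : ℕ) :
    ∑ᶠ a ∈ {a : Polynomial Fq | a.Monic ∧ a.natDegree = d},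
      ((algebraMap (Polynomial Fq) (RatFunc Fq) a) ^ 2)⁻¹ = ((l d) ^ 2)⁻¹ := by
  subst hq hθ
  have hX := RatFunc.transcendental_X (K := Fq)
  have hne := pow_add_evalCoeffs_ne_zero hX d
  have hD : carlitzD (Fintype.card Fq) (RatFunc.X : RatFunc Fq) d ≠ 0 := by
    rw [carlitzD, eval_carlitzE_eq_prod]
    exact Finset.prod_ne_zero_iff.mpr fun c _ => hne c
  rw [carlitzD_eq_mul_carlitzK _ hl0 hl] at hD
  simp_rw [finsum_mem_monic_natDegree_eq_sum, ← RatFunc.aeval_X_left_eq_algebraMap, map_add,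
    map_pow, aeval_X, aeval_degreeLTEquiv_symm]
  rw [sum_inv_sq_add_eq_sq_sum_inv (evalCoeffs Fq _ d) (evalCoeffs_injective hX d) _ hne,
    sum_inv_add_evalCoeffs _ _ d hne, ← carlitzD, carlitzD_eq_mul_carlitzK _ hl0 hl,
    div_mul_cancel_right₀ (right_ne_zero_of_mul hD), inv_pow]
end

section
/- For d ≥ 0, the finite sum Σ_{i=0}^{d-1} b_i(t)/l_i equals τ(b_{d-1}(t))/l_{d-1} = (b_d(t)/l_d)·(θ - θ^{q^d})/(t - θ), where τ replaces θ by θ^q; consequently S_d(1;1)·Σ_{i=0}^{d-1} S_i(1;σ) = (b_d(t)/l_d^2)·(θ - θ^{q^d})/(t - θ). -/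
/-!
Telescoping: writing `x i = θ ^ q ^ i`, we have `b (i + 1) = (t - θ) * ∏_{m<i} (t - x (m + 1))`, so
adding `b (e + 1) / l (e + 1)` to `(∏_{m<e} (t - x (m + 1))) / l e` multiplies it by
`1 + (t - θ) / (θ - x (e + 1)) = (t - x (e + 1)) / (θ - x (e + 1))`, which extends the product by one
factor. No denominator vanishes, since `θ ≠ θ ^ q ^ i` for `i ≥ 1` (as `q ≥ 2`) and `t ≠ θ`.
-/

open Polynomial

namespace RatFunc

variable {K : Type*} [CommRing K] [IsDomain K]

theorem X_ne_C (a : K) : (X : RatFunc K) ≠ C a := fun h =>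
  Polynomial.X_ne_C a <| algebraMap_injective K <| by simpa using h

theorem X_ne_X_pow {n : ℕ} (hn : n ≠ 1) : (X : RatFunc K) ≠ X ^ n := fun h => by
  have hX : (Polynomial.X : K[X]) = Polynomial.X ^ n :=
    algebraMap_injective K <| by simpa using h
  exact hn (by simpa using (congrArg natDegree hX).symm)

end RatFunc

section Telescoping

variable {K : Type*} [Field K] {x : ℕ → K} {t : K} {l b : ℕ → K}

theorem succ_eq_sub_mul_prod_of_rec (hb0 : b 0 = 1) (hb : ∀ i, b (i + 1) = b i * (t - x i))
    (n : ℕ) :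
    b (n + 1) = (t - x 0) * ∏ m ∈ Finset.range n, (t - x (m + 1)) := by
  induction n with
  | zero => simp [hb, hb0]
  | succ n ih => rw [hb, ih, Finset.prod_range_succ, mul_assoc]

theorem ne_zero_of_rec (hx : ∀ i, x 0 ≠ x (i + 1)) (hl0 : l 0 = 1)
    (hl : ∀ i, l (i + 1) = (x 0 - x (i + 1)) * l i) (n : ℕ) : l n ≠ 0 := by
  induction n with
  | zero => simp [hl0]
  | succ n ih => rw [hl]; exact mul_ne_zero (sub_ne_zero.2 (hx n)) ih

theorem sum_div_eq_prod_div_of_rec (hx : ∀ i, x 0 ≠ x (i + 1)) (hl0 : l 0 = 1)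
    (hl : ∀ i, l (i + 1) = (x 0 - x (i + 1)) * l i) (hb0 : b 0 = 1)
    (hb : ∀ i, b (i + 1) = b i * (t - x i)) (e : ℕ) :
    ∑ i ∈ Finset.range (e + 1), b i / l i = (∏ m ∈ Finset.range e, (t - x (m + 1))) / l e := by
  induction e with
  | zero => simp [hb0, hl0]
  | succ e ih =>
    have hle := ne_zero_of_rec hx hl0 hl e
    have hxe := sub_ne_zero.2 (hx e)
    rw [Finset.sum_range_succ, ih, succ_eq_sub_mul_prod_of_rec hb0 hb, hl, Finset.prod_range_succ]
    field_simp
    ring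

theorem prod_div_eq_div_mul_of_rec (hx : ∀ i, x 0 ≠ x (i + 1)) (ht : t ≠ x 0) (hl0 : l 0 = 1)
    (hl : ∀ i, l (i + 1) = (x 0 - x (i + 1)) * l i) (hb0 : b 0 = 1)
    (hb : ∀ i, b (i + 1) = b i * (t - x i)) (e : ℕ) :
    (∏ m ∈ Finset.range e, (t - x (m + 1))) / l e
      = b (e + 1) / l (e + 1) * ((x 0 - x (e + 1)) / (t - x 0)) := by
  have hle := ne_zero_of_rec hx hl0 hl e
  have hxe := sub_ne_zero.2 (hx e)
  have ht0 := sub_ne_zero.2 ht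
  rw [succ_eq_sub_mul_prod_of_rec hb0 hb, hl]
  field_simp

end Telescoping

/-- For `d ≥ 1`: `∑_{i=0}^{d-1} b_i(t)/l_i = τ(b_{d-1}(t))/l_{d-1}
 = (b_d(t)/l_d)·(θ-θ^{q^d})/(t-θ)`, and consequently
`S_d(1;1)·∑_{i<d} S_i(1;σ) = (b_d(t)/l_d²)·(θ-θ^{q^d})/(t-θ)` in `F_q(θ)(t)`. -/
theorem sum_b_div_l_eq
    (Fq : Type) [Field Fq] [Fintype Fq] (q : ℕ) (hq : q = Fintype.card Fq)
    (θ t : RatFunc (RatFunc Fq))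
    (hθ : θ = RatFunc.C (RatFunc.X : RatFunc Fq)) (ht : t = RatFunc.X)
    (l : ℕ → RatFunc (RatFunc Fq)) (hl0 : l 0 = 1)
    (hl : ∀ i, l (i + 1) = (θ - θ ^ q ^ (i + 1)) * l i)
    (b : ℕ → RatFunc (RatFunc Fq)) (hb0 : b 0 = 1)
    (hb : ∀ i, b (i + 1) = b i * (t - θ ^ q ^ i))
    (d : ℕ) (hd : 1 ≤ d) :
    (∑ i ∈ Finset.range d, b i / l i)
        = (∏ m ∈ Finset.range (d - 1), (t - θ ^ q ^ (m + 1))) / l (d - 1) ∧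
    (∏ m ∈ Finset.range (d - 1), (t - θ ^ q ^ (m + 1))) / l (d - 1)
        = b d / l d * ((θ - θ ^ q ^ d) / (t - θ)) ∧
    (l d)⁻¹ * ∑ i ∈ Finset.range d, b i / l i
        = b d / (l d) ^ 2 * ((θ - θ ^ q ^ d) / (t - θ)) := by
  obtain ⟨e, rfl⟩ := Nat.exists_eq_add_of_le' hd
  rw [Nat.add_sub_cancel]
  have hx : ∀ i, θ ^ q ^ 0 ≠ θ ^ q ^ (i + 1) := fun i => by
    have hq1 : 1 < q := hq ▸ Fintype.one_lt_card
    rw [pow_zero, pow_one, hθ, ← map_pow]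
    exact RatFunc.C_injective.ne (RatFunc.X_ne_X_pow (Nat.one_lt_pow i.succ_ne_zero hq1).ne')
  have htθ : t ≠ θ ^ q ^ 0 := by
    rw [pow_zero, pow_one, ht, hθ]
    exact RatFunc.X_ne_C _
  have hl' : ∀ i, l (i + 1) = (θ ^ q ^ 0 - θ ^ q ^ (i + 1)) * l i := by simpa using hl
  have hsum := sum_div_eq_prod_div_of_rec hx hl0 hl' hb0 hb e
  have hprod := prod_div_eq_div_mul_of_rec hx htθ hl0 hl' hb0 hb e
  simp only [pow_zero, pow_one] at hprod
  refine ⟨hsum, hprod, ?_⟩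
  rw [hsum, hprod]
  ring
end

section
/- Let q > 2, d ≥ 1, and set α_i = b_i(θ^{q^d})/l_i, β_j = 1/l_j, δ_{i,j} = deg_θ(α_i β_j) for d ≥ i > j ≥ 0. Then δ_{i,j} = i·q^d − Σ_{n=1}^{i} q^n − Σ_{m=1}^{j} q^m, and for pairs (i,j), (i',j') with d ≥ i > j ≥ 0 and d ≥ i' > j' ≥ 0, δ_{i,j} = δ_{i',j'} if and only if (i=i' and j=j'), or (i=d, i'=d−1, j=j'), or (i'=d, i=d−1, j=j'). -/
set_option autoImplicit false

open Polynomial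

/-!
Every factor `θ^a - θ^b` with `a > b` has degree `a`, so `deg l_i = q + ⋯ + q^i` and
`deg b_i(θ^{q^d}) = i q^d`, which gives the formula for `δ_{i,j}`. Raising `i` by one adds
`q^d - q^{i+1}` to `δ_{i,j}`: nothing for `i = d - 1`, and otherwise at least
`q^d - q^{d-1}`, which for `q ≥ 3` exceeds the whole range `q + ⋯ + q^{d-1}` of the
`j`-contribution. Hence `δ` is injective once `i = d` is identified with `i = d - 1`.
-/

def powSum (q : ℤ) (k : ℕ) : ℤ := ∑ m ∈ Finset.Icc 1 k, q ^ m

theorem powSum_succ (q : ℤ) (k : ℕ) : powSum q (k + 1) = powSum q k + q ^ (k + 1) :=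
  Finset.sum_Icc_succ_top (by omega) _

theorem powSum_eq_sum_range (q : ℤ) (k : ℕ) :
    powSum q k = ∑ n ∈ Finset.range k, q ^ (n + 1) := by
  induction k with
  | zero => rfl
  | succ k ih => rw [powSum_succ, ih, Finset.sum_range_succ]

theorem powSum_nonneg {q : ℤ} (hq : 0 ≤ q) (k : ℕ) : 0 ≤ powSum q k :=
  Finset.sum_nonneg fun m _ => pow_nonneg hq m

theorem powSum_strictMono {q : ℤ} (hq : 0 < q) : StrictMono (powSum q) :=
  strictMono_nat_of_lt_succ fun k => by rw [powSum_succ]; linarith [pow_pos hq (k + 1)]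

theorem powSum_lt_pow_succ_sub_pow {q : ℤ} (hq : 3 ≤ q) (k : ℕ) :
    powSum q k < q ^ (k + 1) - q ^ k := by
  have hq0 : 0 ≤ q := by linarith
  induction k with
  | zero => simpa [powSum] using show (1 : ℤ) < q by linarith
  | succ k ih =>
    have h3 : q ^ (k + 1) * 3 ≤ q ^ (k + 1 + 1) := by
      rw [pow_succ q (k + 1)]
      exact mul_le_mul_of_nonneg_left hq (pow_nonneg hq0 _)
    rw [powSum_succ]
    linarith [pow_nonneg hq0 k]

/-- `alphaDegree q d i = deg_θ α_i`, `powSum q j = deg_θ l_j`, and `delta q d i j = δ_{i,j}`. -/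
def alphaDegree (q : ℤ) (d i : ℕ) : ℤ := i * q ^ d - powSum q i

def delta (q : ℤ) (d i j : ℕ) : ℤ := alphaDegree q d i - powSum q j

section Arithmetic

variable {q : ℤ}

theorem alphaDegree_succ (d k : ℕ) :
    alphaDegree q d (k + 1) = alphaDegree q d k + (q ^ d - q ^ (k + 1)) := by
  simp only [alphaDegree, powSum_succ]
  push_cast
  ring

theorem alphaDegree_self_succ (k : ℕ) : alphaDegree q (k + 1) (k + 1) = alphaDegree q (k + 1) k := by
  rw [alphaDegree_succ, sub_self, add_zero]

theorem alphaDegree_add_le (hq : 1 ≤ q) {a b e : ℕ} (hab : a < b) (hbe : b ≤ e) :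
    alphaDegree q (e + 1) a + (q ^ (e + 1) - q ^ e) ≤ alphaDegree q (e + 1) b := by
  induction b, hab using Nat.le_induction with
  | base =>
    rw [alphaDegree_succ]
    have : q ^ (a + 1) ≤ q ^ e := pow_le_pow_right₀ hq hbe
    linarith
  | succ b hab ih =>
    rw [alphaDegree_succ]
    linarith [ih (by omega), pow_le_pow_right₀ hq (by omega : b + 1 ≤ e + 1)]

theorem delta_lt_delta (hq : 3 ≤ q) {e i i' : ℕ} (j : ℕ) {j' : ℕ} (hii' : i < i') (hi' : i' ≤ e)
    (hj' : j' ≤ e) : delta q (e + 1) i j < delta q (e + 1) i' j' := by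
  have hgap := alphaDegree_add_le (by linarith) hii' hi'
  have hj'_le : powSum q j' ≤ powSum q e := (powSum_strictMono (by linarith)).monotone hj'
  have hj_nonneg : 0 ≤ powSum q j := powSum_nonneg (by linarith) j
  unfold delta
  linarith [powSum_lt_pow_succ_sub_pow hq e]

theorem delta_injective (hq : 3 ≤ q) {e i j i' j' : ℕ} (hi : i ≤ e) (hj : j ≤ e) (hi' : i' ≤ e)
    (hj' : j' ≤ e) (h : delta q (e + 1) i j = delta q (e + 1) i' j') : i = i' ∧ j = j' := by
  obtain rfl : i = i' := by
    rcases lt_trichotomy i i' with hlt | heq | hgt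
    · exact absurd h (delta_lt_delta hq j hlt hi' hj').ne
    · exact heq
    · exact absurd h (delta_lt_delta hq j' hgt hi hj).ne'
  refine ⟨rfl, (powSum_strictMono (q := q) (by linarith)).injective ?_⟩
  unfold delta at h
  linarith

theorem delta_eq_delta_min {e i : ℕ} (j : ℕ) (hi : i ≤ e + 1) :
    delta q (e + 1) i j = delta q (e + 1) (min i e) j := by
  rcases Nat.lt_or_eq_of_le hi with hi | rfl
  · rw [min_eq_left (by omega)]
  · rw [min_eq_right (by omega), delta, delta, alphaDegree_self_succ]

theorem delta_eq_delta_iff (hq : 3 ≤ q) {d i j i' j' : ℕ} (hji : j < i) (hid : i ≤ d)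
    (hji' : j' < i') (hid' : i' ≤ d) :
    delta q d i j = delta q d i' j' ↔
      (i = i' ∧ j = j') ∨ (i = d ∧ i' = d - 1 ∧ j = j') ∨ (i' = d ∧ i = d - 1 ∧ j = j') := by
  obtain ⟨e, rfl⟩ : ∃ e, d = e + 1 := ⟨d - 1, by omega⟩
  rw [Nat.add_sub_cancel]
  constructor
  · intro h
    rw [delta_eq_delta_min j hid, delta_eq_delta_min j' hid'] at h
    obtain ⟨hmin, rfl⟩ :=
      delta_injective hq (min_le_right i e) (by omega) (min_le_right i' e) (by omega) h
    omega
  · rintro (⟨rfl, rfl⟩ | ⟨rfl, rfl, rfl⟩ | ⟨rfl, rfl, rfl⟩)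
    · rfl
    · rw [delta_eq_delta_min j hid, min_eq_right le_self_add]
    · rw [delta_eq_delta_min j hid', min_eq_right le_self_add]

end Arithmetic

namespace RatFunc

variable {K : Type*} [Field K]

theorem intDegree_prod {ι : Type*} (s : Finset ι) (f : ι → RatFunc K) (hf : ∀ i ∈ s, f i ≠ 0) :
    (∏ i ∈ s, f i).intDegree = ∑ i ∈ s, (f i).intDegree := by
  classical
  induction s using Finset.induction_on with
  | empty => simp
  | insert a s ha ih =>
    rw [Finset.prod_insert ha, Finset.sum_insert ha,
      intDegree_mul (hf a (by simp)) (Finset.prod_ne_zero_iff.mpr fun i hi => hf i (by simp [hi])),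
      ih fun i hi => hf i (by simp [hi])]

theorem intDegree_X_pow_sub_X_pow {a b : ℕ} (hba : b < a) :
    ((RatFunc.X : RatFunc K) ^ a - RatFunc.X ^ b).intDegree = (a : ℤ) := by
  have hdeg : ((Polynomial.X : K[X]) ^ a - Polynomial.X ^ b).natDegree = a := by
    rw [natDegree_sub_eq_left_of_natDegree_lt (by simpa using hba), natDegree_X_pow]
  rw [← algebraMap_X, ← map_pow, ← map_pow, ← map_sub, intDegree_polynomial, hdeg]

theorem X_pow_sub_X_pow_ne_zero {a b : ℕ} (hba : b < a) :
    (RatFunc.X : RatFunc K) ^ a - RatFunc.X ^ b ≠ 0 := by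
  intro h
  have := intDegree_X_pow_sub_X_pow (K := K) hba
  rw [h, intDegree_zero] at this
  omega

theorem X_sub_X_pow_eq_neg (m : ℕ) :
    (RatFunc.X - RatFunc.X ^ m : RatFunc K) = -(RatFunc.X ^ m - RatFunc.X ^ 1) := by
  rw [pow_one, neg_sub]

theorem X_sub_X_pow_ne_zero {m : ℕ} (hm : 1 < m) : (RatFunc.X - RatFunc.X ^ m : RatFunc K) ≠ 0 := by
  rw [X_sub_X_pow_eq_neg, neg_ne_zero]
  exact X_pow_sub_X_pow_ne_zero hm

theorem intDegree_X_sub_X_pow {m : ℕ} (hm : 1 < m) :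
    (RatFunc.X - RatFunc.X ^ m : RatFunc K).intDegree = (m : ℤ) := by
  rw [X_sub_X_pow_eq_neg, intDegree_neg, intDegree_X_pow_sub_X_pow hm]

end RatFunc

section Products

variable {K : Type*} [Field K] {q : ℕ}

theorem prod_X_sub_X_pow_pow_ne_zero (hq : 1 < q) (i : ℕ) :
    ∏ n ∈ Finset.range i, (RatFunc.X - RatFunc.X ^ q ^ (n + 1) : RatFunc K) ≠ 0 :=
  Finset.prod_ne_zero_iff.mpr fun n _ =>
    RatFunc.X_sub_X_pow_ne_zero (Nat.one_lt_pow n.succ_ne_zero hq)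

theorem intDegree_prod_X_sub_X_pow_pow (hq : 1 < q) (i : ℕ) :
    (∏ n ∈ Finset.range i, (RatFunc.X - RatFunc.X ^ q ^ (n + 1) : RatFunc K)).intDegree =
      powSum q i := by
  rw [RatFunc.intDegree_prod _ _ fun n _ =>
      RatFunc.X_sub_X_pow_ne_zero (Nat.one_lt_pow n.succ_ne_zero hq),
    powSum_eq_sum_range]
  refine Finset.sum_congr rfl fun n _ => ?_
  rw [RatFunc.intDegree_X_sub_X_pow (Nat.one_lt_pow n.succ_ne_zero hq)]
  push_cast
  rfl

theorem prod_X_pow_pow_sub_X_pow_pow_ne_zero (hq : 1 < q) {d i : ℕ} (hid : i ≤ d) :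
    ∏ n ∈ Finset.range i, (RatFunc.X ^ q ^ d - RatFunc.X ^ q ^ n : RatFunc K) ≠ 0 :=
  Finset.prod_ne_zero_iff.mpr fun _ hn => RatFunc.X_pow_sub_X_pow_ne_zero
    (Nat.pow_lt_pow_right hq ((Finset.mem_range.mp hn).trans_le hid))

theorem intDegree_prod_X_pow_pow_sub_X_pow_pow (hq : 1 < q) {d i : ℕ} (hid : i ≤ d) :
    (∏ n ∈ Finset.range i, (RatFunc.X ^ q ^ d - RatFunc.X ^ q ^ n : RatFunc K)).intDegree =
      i * (q : ℤ) ^ d := by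
  rw [RatFunc.intDegree_prod]
  · rw [Finset.sum_congr rfl fun _ hn => RatFunc.intDegree_X_pow_sub_X_pow
      (Nat.pow_lt_pow_right hq ((Finset.mem_range.mp hn).trans_le hid))]
    simp
  · exact Finset.prod_ne_zero_iff.mp (prod_X_pow_pow_sub_X_pow_pow_ne_zero hq hid)

end Products

theorem degrees_alpha_beta_general
    (Fq : Type) [Field Fq] (q : ℕ) (hq2 : 2 < q)
    (θ : RatFunc Fq) (hθ : θ = RatFunc.X)
    (l : ℕ → RatFunc Fq) (hl0 : l 0 = 1)
    (hl : ∀ i, l (i + 1) = (θ - θ ^ q ^ (i + 1)) * l i)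
    (d : ℕ)
    (α β : ℕ → RatFunc Fq)
    (hα : ∀ i, α i = (∏ n ∈ Finset.range i, (θ ^ q ^ d - θ ^ q ^ n)) / l i)
    (hβ : ∀ j, β j = (l j)⁻¹) :
    (∀ i j, j < i → i ≤ d →
      (α i * β j).intDegree =
        (i : ℤ) * q ^ d - ∑ n ∈ Finset.Icc 1 i, (q : ℤ) ^ n
          - ∑ m ∈ Finset.Icc 1 j, (q : ℤ) ^ m) ∧
    (∀ i j i' j', j < i → i ≤ d → j' < i' → i' ≤ d →
      ((α i * β j).intDegree = (α i' * β j').intDegree ↔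
        (i = i' ∧ j = j') ∨ (i = d ∧ i' = d - 1 ∧ j = j') ∨
          (i' = d ∧ i = d - 1 ∧ j = j'))) := by
  subst hθ
  have hq1 : 1 < q := by omega
  have hl_eq_prod : ∀ i, l i = ∏ n ∈ Finset.range i, (RatFunc.X - RatFunc.X ^ q ^ (n + 1)) :=
    fun i => (Finset.prod_range_induction _ l hl0 i fun n _ => by rw [hl, mul_comm]).symm
  have hdeg : ∀ i j, j < i → i ≤ d → (α i * β j).intDegree = delta q d i j := by
    intro i j _ hid
    rw [hα, hβ, hl_eq_prod, hl_eq_prod,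
      RatFunc.intDegree_mul (div_ne_zero (prod_X_pow_pow_sub_X_pow_pow_ne_zero hq1 hid)
        (prod_X_sub_X_pow_pow_ne_zero hq1 i)) (inv_ne_zero (prod_X_sub_X_pow_pow_ne_zero hq1 j)),
      RatFunc.intDegree_div (prod_X_pow_pow_sub_X_pow_pow_ne_zero hq1 hid)
        (prod_X_sub_X_pow_pow_ne_zero hq1 i),
      RatFunc.intDegree_inv, intDegree_prod_X_pow_pow_sub_X_pow_pow hq1 hid,
      intDegree_prod_X_sub_X_pow_pow hq1, intDegree_prod_X_sub_X_pow_pow hq1]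
    rfl
  refine ⟨hdeg, fun i j i' j' hji hid hji' hid' => ?_⟩
  rw [hdeg i j hji hid, hdeg i' j' hji' hid']
  exact delta_eq_delta_iff (by omega) hji hid hji' hid'

/-- For `q > 2`, `d ≥ 1`, with `α_i = b_i(θ^{q^d})/l_i`, `β_j = 1/l_j`:
`δ_{i,j} := deg_θ(α_i β_j) = i q^d − ∑_{n=1}^i qⁿ − ∑_{m=1}^j qᵐ` for `d ≥ i > j ≥ 0`,
and `δ_{i,j} = δ_{i',j'}` iff `(i,j)=(i',j')`, or `i=d, i'=d−1, j=j'`, or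
`i'=d, i=d−1, j=j'`. -/
theorem degrees_alpha_beta
    (Fq : Type) [Field Fq] [Fintype Fq] (q : ℕ) (hq : q = Fintype.card Fq) (hq2 : 2 < q)
    (θ : RatFunc Fq) (hθ : θ = RatFunc.X)
    (l : ℕ → RatFunc Fq) (hl0 : l 0 = 1)
    (hl : ∀ i, l (i + 1) = (θ - θ ^ q ^ (i + 1)) * l i)
    (d : ℕ) (hd : 1 ≤ d)
    (α β : ℕ → RatFunc Fq)
    (hα : ∀ i, α i = (∏ n ∈ Finset.range i, (θ ^ q ^ d - θ ^ q ^ n)) / l i)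
    (hβ : ∀ j, β j = (l j)⁻¹) :
    (∀ i j, j < i → i ≤ d →
      (α i * β j).intDegree =
        (i : ℤ) * q ^ d - ∑ n ∈ Finset.Icc 1 i, (q : ℤ) ^ n
          - ∑ m ∈ Finset.Icc 1 j, (q : ℤ) ^ m) ∧
    (∀ i j i' j', j < i → i ≤ d → j' < i' → i' ≤ d →
      ((α i * β j).intDegree = (α i' * β j').intDegree ↔
        (i = i' ∧ j = j') ∨ (i = d ∧ i' = d - 1 ∧ j = j') ∨
          (i' = d ∧ i = d - 1 ∧ j = j'))) :=
  degrees_alpha_beta_general Fq q hq2 θ hθ l hl0 hl d α β hα hβ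
end

section
/- For all n ≥ 1 and d ≥ 0, τ^n(b_d(t)) = l_d^{q^{n−1}} · Σ_{d ≥ i_1 ≥ i_2 ≥ ··· ≥ i_n ≥ 0} l_{i_1}^{q^{n−2}−q^{n−1}} l_{i_2}^{q^{n−3}−q^{n−2}} ··· l_{i_{n−1}}^{1−q} l_{i_n}^{−1} b_{i_n}(t) in F_q(θ)[t], where τ^n replaces θ by θ^{q^n}. -/
set_option autoImplicit false

open Polynomial

/-!
For any sequence of roots `a`, the identity
`∏_{m<d} (X - a_{m+1}) = l_d ∑_{i ≤ d} l_i⁻¹ ∏_{m<i} (X - a_m)` holds as soon as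
`l_{i+1} = (a_0 - a_{i+1}) l_i`; with `a_m = θ^{q^m}` it is `τ(b_d) = l_d ∑ b_i / l_i`.
Since `x ↦ x^{q^n}` is additive, the same identity for the roots `θ^{q^{n+m}}` reads
`τⁿ⁺¹(b_d) = l_d^{qⁿ} ∑_{i ≤ d} l_i^{-qⁿ} τⁿ(b_i)`,
and unrolling this recurrence `n` times expands `τⁿ(b_d)` as a sum over decreasing chains
`d ≥ i₁ ≥ ⋯ ≥ iₙ`.
-/

namespace IteratedTwist

open Finset

variable {K : Type*} [Field K]

theorem prod_X_sub_C_succ_eq_sum (a l : ℕ → K) (hl0 : l 0 = 1)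
    (hl : ∀ i, l (i + 1) = (a 0 - a (i + 1)) * l i) (hl_ne : ∀ i, l i ≠ 0) (d : ℕ) :
    ∏ m ∈ range d, (X - C (a (m + 1))) =
      C (l d) * ∑ i ∈ range (d + 1), C (l i)⁻¹ * ∏ m ∈ range i, (X - C (a m)) := by
  induction d with
  | zero => simp [hl0]
  | succ d ih =>
    have hb : (∏ m ∈ range d, (X - C (a (m + 1)))) * (X - C (a 0)) =
        ∏ m ∈ range (d + 1), (X - C (a m)) := by
      rw [prod_range_succ' _ d]
    have hC : C (l (d + 1)) * C (l (d + 1))⁻¹ = (1 : K[X]) := by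
      rw [← C_mul, mul_inv_cancel₀ (hl_ne _), C_1]
    calc ∏ m ∈ range (d + 1), (X - C (a (m + 1)))
        = (∏ m ∈ range d, (X - C (a (m + 1)))) * (X - C (a 0))
          + C (a 0 - a (d + 1)) * ∏ m ∈ range d, (X - C (a (m + 1))) := by
          rw [prod_range_succ, C_sub]; ring
      _ = _ := by
          rw [hb, ih, sum_range_succ _ (d + 1), mul_add, ← mul_assoc (C (l (d + 1))), hC, one_mul,
            hl d, C_mul]
          ring

def consSeq (j : ℕ) (i : ℕ → ℕ) : ℕ → ℕ
  | 0 => j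
  | k + 1 => i k

theorem consSeq_injective (j : ℕ) : Function.Injective (consSeq j) :=
  fun _ _ h => funext fun k => congrFun h (k + 1)

def chains (n d : ℕ) : Set (ℕ → ℕ) :=
  {i | i 0 ≤ d ∧ (∀ k, k + 1 < n → i (k + 1) ≤ i k) ∧ (∀ k, n ≤ k → i k = 0)}

theorem chains_one (d : ℕ) : chains 1 d = (consSeq · 0) '' ↑(range (d + 1)) := by
  ext i
  constructor
  · rintro ⟨h0, -, hz⟩
    refine ⟨i 0, by simpa [Nat.lt_succ_iff] using h0, funext fun k => ?_⟩
    cases k with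
    | zero => rfl
    | succ k => exact (hz (k + 1) (by omega)).symm
  · rintro ⟨j, hj, rfl⟩
    refine ⟨Nat.lt_succ_iff.mp (mem_range.mp hj), fun k hk => by omega, fun k hk => ?_⟩
    cases k with
    | zero => omega
    | succ k => rfl

theorem chains_succ_succ (m d : ℕ) :
    chains (m + 2) d = ⋃ j ∈ (↑(range (d + 1)) : Set ℕ), consSeq j '' chains (m + 1) j := by
  ext i
  simp only [Set.mem_iUnion, coe_range, Set.mem_Iio, Set.mem_image, exists_prop]
  constructor
  · rintro ⟨h0, hdec, hz⟩
    refine ⟨i 0, Nat.lt_succ_of_le h0, fun k => i (k + 1),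
      ⟨hdec 0 (by omega), fun k hk => hdec (k + 1) (by omega),
        fun k hk => hz (k + 1) (by omega)⟩,
      funext fun k => ?_⟩
    cases k <;> rfl
  · rintro ⟨j, hj, i', ⟨h0, hdec, hz⟩, rfl⟩
    refine ⟨Nat.lt_succ_iff.mp hj, fun k hk => ?_, fun k hk => ?_⟩
    · cases k with
      | zero => exact h0
      | succ k => exact hdec k (by omega)
    · cases k with
      | zero => omega
      | succ k => exact hz k (by omega)

theorem pairwiseDisjoint_image_consSeq (m d : ℕ) :
    (↑(range (d + 1)) : Set ℕ).PairwiseDisjoint (fun j => consSeq j '' chains (m + 1) j) := by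
  rintro j - j' - hne _ hj hj' x hx
  obtain ⟨i, -, rfl⟩ := hj hx
  obtain ⟨i', -, hi'⟩ := hj' hx
  exact hne (congrFun hi' 0).symm

theorem chains_finite (m d : ℕ) : (chains (m + 1) d).Finite := by
  induction m generalizing d with
  | zero => rw [chains_one]; exact (finite_toSet _).image _
  | succ m ih =>
    rw [chains_succ_succ]
    exact (finite_toSet _).biUnion fun j _ => (ih j).image _

def chainWeight (q : ℕ) (l : ℕ → K) (n : ℕ) (i : ℕ → ℕ) : K :=
  (∏ k ∈ range (n - 1), l (i k) ^ ((q : ℤ) ^ (n - 2 - k) - (q : ℤ) ^ (n - 1 - k))) *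
    (l (i (n - 1)))⁻¹

theorem chainWeight_one (q : ℕ) (l : ℕ → K) (i : ℕ → ℕ) :
    chainWeight q l 1 i = (l (i 0))⁻¹ := by
  simp [chainWeight]

theorem chainWeight_consSeq (q : ℕ) (l : ℕ → K) (m j : ℕ) (i : ℕ → ℕ) :
    chainWeight q l (m + 2) (consSeq j i) =
      l j ^ ((q : ℤ) ^ m - (q : ℤ) ^ (m + 1)) * chainWeight q l (m + 1) i := by
  have hexp : ∀ k ∈ range m, l (consSeq j i (k + 1)) ^
      ((q : ℤ) ^ (m - (k + 1)) - (q : ℤ) ^ (m + 1 - (k + 1))) =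
      l (i k) ^ ((q : ℤ) ^ (m + 1 - 2 - k) - (q : ℤ) ^ (m + 1 - 1 - k)) := fun k _ => by
    congr 3 <;> omega
  unfold chainWeight
  rw [show m + 2 - 1 = m + 1 by omega, show m + 2 - 2 = m by omega,
    prod_range_succ', prod_congr rfl hexp, Nat.add_sub_cancel]
  simp only [consSeq, Nat.sub_zero]
  ring

theorem zpow_pow_sub_pow_succ {l : K} (hl : l ≠ 0) (q m : ℕ) :
    l ^ ((q : ℤ) ^ m - (q : ℤ) ^ (m + 1)) = (l ^ q ^ (m + 1))⁻¹ * l ^ q ^ m := by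
  rw [zpow_sub₀ hl, div_eq_inv_mul]
  norm_cast

theorem eq_C_mul_finsum_chains (q : ℕ) (l : ℕ → K) (hl : ∀ i, l i ≠ 0)
    (F : ℕ → ℕ → K[X])
    (hF : ∀ n d, F (n + 1) d =
      C (l d ^ q ^ n) * ∑ i ∈ range (d + 1), C (l i ^ q ^ n)⁻¹ * F n i)
    (m d : ℕ) :
    F (m + 1) d = C (l d ^ q ^ m) *
      ∑ᶠ i ∈ chains (m + 1) d, C (chainWeight q l (m + 1) i) * F 0 (i m) := by
  induction m generalizing d with
  | zero =>
    rw [chains_one, finsum_mem_image fun _ _ _ _ h => congrFun h 0, finsum_mem_coe_finset, hF]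
    simp [chainWeight_one, consSeq]
  | succ m ih =>
    rw [hF, chains_succ_succ,
      finsum_mem_biUnion (pairwiseDisjoint_image_consSeq m d) (finite_toSet _)
        fun j _ => (chains_finite m j).image _,
      finsum_mem_coe_finset]
    congr 1
    refine sum_congr rfl fun j _ => ?_
    rw [finsum_mem_image (consSeq_injective j).injOn, ih, ← mul_assoc, ← C_mul, mul_finsum_mem]
    refine finsum_mem_congr rfl fun i _ => ?_
    rw [chainWeight_consSeq, zpow_pow_sub_pow_succ (hl j)]
    simp only [C_mul, mul_assoc, consSeq]

/-- The paper's `τⁿ(b_d)`, with `θ ↦ θ^q` for `τ`; `b_d` is `twistedProd θ q 0 d`. -/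
noncomputable def twistedProd (θ : K) (q n d : ℕ) : K[X] :=
  ∏ m ∈ range d, (X - C (θ ^ q ^ (n + m)))

theorem twistedProd_succ {F : Type*} [Field F] [Fintype F] [Algebra F K] (θ : K) (l : ℕ → K)
    (hl0 : l 0 = 1) (hl : ∀ i, l (i + 1) = (θ - θ ^ Fintype.card F ^ (i + 1)) * l i)
    (hl_ne : ∀ i, l i ≠ 0) (n d : ℕ) :
    twistedProd θ (Fintype.card F) (n + 1) d =
      C (l d ^ Fintype.card F ^ n) * ∑ i ∈ range (d + 1),
        C (l i ^ Fintype.card F ^ n)⁻¹ * twistedProd θ (Fintype.card F) n i := by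
  set q := Fintype.card F
  have frob_sub (x y : K) : (x - y) ^ q ^ n = x ^ q ^ n - y ^ q ^ n := by
    simpa [AlgHom.coe_pow, FiniteField.coe_frobeniusAlgHom, pow_iterate] using
      map_sub (FiniteField.frobeniusAlgHom F K ^ n) x y
  have := prod_X_sub_C_succ_eq_sum (fun m => θ ^ q ^ (n + m)) (fun i => l i ^ q ^ n)
    (by simp [hl0])
    (fun i => by simp only [hl, mul_pow, frob_sub, ← pow_mul, ← pow_add, add_zero, add_comm])
    (fun i => pow_ne_zero _ (hl_ne i)) d
  simpa [twistedProd, add_assoc, add_comm 1] using this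

end IteratedTwist

theorem RatFunc.X_sub_X_pow_ne_zero_s17 {F : Type*} [Field F] {N : ℕ} (hN : N ≠ 1) :
    (RatFunc.X : RatFunc F) - RatFunc.X ^ N ≠ 0 := by
  rw [sub_ne_zero, ← RatFunc.algebraMap_X, ← map_pow, Ne,
    (RatFunc.algebraMap_injective F).eq_iff]
  intro h
  have : 1 = N := by simpa using (congrArg natDegree h).trans (natDegree_X_pow N)
  exact hN this.symm

/-- For all `n ≥ 1`, `d ≥ 0`:
`τⁿ(b_d(t)) = l_d^{q^{n−1}} ∑_{d ≥ i₁ ≥ ⋯ ≥ iₙ ≥ 0}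
  l_{i₁}^{q^{n−2}−q^{n−1}} ⋯ l_{i_{n−1}}^{1−q} l_{iₙ}^{−1} b_{iₙ}(t)` in `F_q(θ)[t]`,
where `τⁿ` replaces `θ` by `θ^{qⁿ}`. Chains are encoded as functions `i : ℕ → ℕ`
with `i 0 ≤ d`, decreasing on `{0,…,n−1}` (`i k ↔ i_{k+1}` of the paper), and
vanishing from index `n` on. -/
theorem iterated_twist_b
    (Fq : Type) [Field Fq] [Fintype Fq] (q : ℕ) (hq : q = Fintype.card Fq)
    (θ : RatFunc Fq) (hθ : θ = RatFunc.X)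
    (l : ℕ → RatFunc Fq) (hl0 : l 0 = 1)
    (hl : ∀ i, l (i + 1) = (θ - θ ^ q ^ (i + 1)) * l i)
    (b : ℕ → Polynomial (RatFunc Fq)) (hb0 : b 0 = 1)
    (hb : ∀ i, b (i + 1) = b i * (X - C (θ ^ q ^ i)))
    (n : ℕ) (hn : 1 ≤ n) (d : ℕ) :
    (∏ m ∈ Finset.range d, (X - C (θ ^ q ^ (n + m)))) =
      C ((l d) ^ q ^ (n - 1)) *
        ∑ᶠ i ∈ {i : ℕ → ℕ | i 0 ≤ d ∧ (∀ k, k + 1 < n → i (k + 1) ≤ i k) ∧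
            (∀ k, n ≤ k → i k = 0)},
          C ((∏ k ∈ Finset.range (n - 1),
                (l (i k)) ^ ((q : ℤ) ^ (n - 2 - k) - (q : ℤ) ^ (n - 1 - k))) *
              (l (i (n - 1)))⁻¹) *
            b (i (n - 1)) := by
  subst hq hθ
  have hl_ne : ∀ i, l i ≠ 0 := by
    intro i
    induction i with
    | zero => simp [hl0]
    | succ i ih =>
      have hq_pow : Fintype.card Fq ^ (i + 1) ≠ 1 :=
        (Nat.one_lt_pow (by omega) Fintype.one_lt_card).ne'
      rw [hl]
      exact mul_ne_zero (RatFunc.X_sub_X_pow_ne_zero_s17 hq_pow) ih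
  have hb_eq : ∀ i, b i = IteratedTwist.twistedProd RatFunc.X (Fintype.card Fq) 0 i := by
    intro i
    induction i with
    | zero => simp [hb0, IteratedTwist.twistedProd]
    | succ i ih => simp [hb, ih, IteratedTwist.twistedProd, Finset.prod_range_succ]
  obtain ⟨m, rfl⟩ : ∃ m, n = m + 1 := ⟨n - 1, by omega⟩
  have expansion := IteratedTwist.eq_C_mul_finsum_chains _ l hl_ne _
    (IteratedTwist.twistedProd_succ _ l hl0 hl hl_ne) m d
  simp only [← hb_eq] at expansion
  exact expansion
end
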